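/- arXiv:2403.04137 — 10 statements merged into one kernel-verified Lean document; each statement's English description precedes it below -/
import Mathlib

section
/- Let X be a Banach space with a Schauder decomposition (X_n) and associated projections (P_n). For a bounded linear operator A on X, the following are equivalent: (α) A = lim_n A P_n and A = lim_n P_n A in operator norm; (β) A = lim_m lim_n P_m A P_n in operator norm; (γ) A = lim_n lim_m P_m A P_n in operator norm; (δ) A = lim_n P_n A P_n in operator norm. -/
/-!
Banach–Steinhaus makes the projections uniformly bounded, `‖P n‖ ≤ C`. Then `T k → A` forces
`T k * P n → A * P n` uniformly in `n`, so the Moore–Osgood interchange of limits turns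
"`T k * P n → T k` for every `k`" into "`A * P n → A`", and likewise on the left. For (β) and (γ)
the inner limits are identified by strong convergence `P n → 1` (`B m = P m * A`,
resp. `B n = A * P n`); for (δ) take `T k = P k * A * P k`, for which `T k * P n = T k` and
`P n * T k = T k` once `n ≥ k`. Conversely (α) gives (δ) through
`P n A P n - A = P n (A P n - A) + (P n A - A)`.
-/

open Filter Topology

section NormedRing

variable {R ι κ : Type*} [NonUnitalSeminormedRing R] {S : ι → R} {C : ℝ} {T : κ → R} {a : R}
  {l : Filter κ}

theorem tendstoUniformly_mul_const_of_norm_le (hS : ∀ i, ‖S i‖ ≤ C) (hT : Tendsto T l (𝓝 a)) :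
    TendstoUniformly (fun k i => T k * S i) (fun i => a * S i) l := by
  rw [Metric.tendstoUniformly_iff]
  intro ε hε
  have hsmall : Tendsto (fun k => ‖a - T k‖ * C) l (𝓝 0) := by
    simpa using ((tendsto_iff_norm_sub_tendsto_zero.mp hT).mul_const C).congr
      fun k => by rw [norm_sub_rev]
  filter_upwards [hsmall.eventually (gt_mem_nhds hε)] with k hk i
  calc dist (a * S i) (T k * S i) = ‖(a - T k) * S i‖ := by rw [dist_eq_norm, sub_mul]
    _ ≤ ‖a - T k‖ * C := (norm_mul_le _ _).trans (by gcongr; exact hS i)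
    _ < ε := hk

theorem tendstoUniformly_const_mul_of_norm_le (hS : ∀ i, ‖S i‖ ≤ C) (hT : Tendsto T l (𝓝 a)) :
    TendstoUniformly (fun k i => S i * T k) (fun i => S i * a) l := by
  rw [Metric.tendstoUniformly_iff]
  intro ε hε
  have hsmall : Tendsto (fun k => C * ‖a - T k‖) l (𝓝 0) := by
    simpa using ((tendsto_iff_norm_sub_tendsto_zero.mp hT).const_mul C).congr
      fun k => by rw [norm_sub_rev]
  filter_upwards [hsmall.eventually (gt_mem_nhds hε)] with k hk i
  calc dist (S i * a) (S i * T k) = ‖S i * (a - T k)‖ := by rw [dist_eq_norm, mul_sub]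
    _ ≤ C * ‖a - T k‖ := (norm_mul_le _ _).trans (by gcongr; exact hS i)
    _ < ε := hk

variable [NeBot l] {l' : Filter ι}

theorem tendsto_mul_const_of_tendsto_of_norm_le (hS : ∀ i, ‖S i‖ ≤ C) (hT : Tendsto T l (𝓝 a))
    (hTS : ∀ k, Tendsto (fun i => T k * S i) l' (𝓝 (T k))) :
    Tendsto (fun i => a * S i) l' (𝓝 a) :=
  (tendstoUniformly_mul_const_of_norm_le hS hT).tendsto_of_eventually_tendsto
    (.of_forall hTS) hT

theorem tendsto_const_mul_of_tendsto_of_norm_le (hS : ∀ i, ‖S i‖ ≤ C) (hT : Tendsto T l (𝓝 a))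
    (hTS : ∀ k, Tendsto (fun i => S i * T k) l' (𝓝 (T k))) :
    Tendsto (fun i => S i * a) l' (𝓝 a) :=
  (tendstoUniformly_const_mul_of_norm_le hS hT).tendsto_of_eventually_tendsto
    (.of_forall hTS) hT

end NormedRing

theorem tendsto_mul_mul_of_tendsto_mul {R ι : Type*} [NonUnitalSeminormedRing R] {S : ι → R}
    {a : R} {l : Filter ι} (hS : IsBoundedUnder (· ≤ ·) l (‖S ·‖))
    (hright : Tendsto (fun i => a * S i) l (𝓝 a)) (hleft : Tendsto (fun i => S i * a) l (𝓝 a)) :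
    Tendsto (fun i => S i * a * S i) l (𝓝 a) := by
  rw [← tendsto_sub_nhds_zero_iff] at hright hleft ⊢
  simpa [mul_sub, mul_assoc, sub_add_sub_cancel] using
    (isBoundedUnder_le_mul_tendsto_zero hS hright).add hleft

section Operators

variable {𝕜 E F : Type*} [NontriviallyNormedField 𝕜] [NormedAddCommGroup E] [NormedSpace 𝕜 E]
  [NormedAddCommGroup F] [NormedSpace 𝕜 F]

theorem exists_norm_le_of_tendsto_apply [CompleteSpace E] {L : ℕ → E →L[𝕜] F} {f : E → F}
    (hL : ∀ x, Tendsto (fun n => L n x) atTop (𝓝 (f x))) : ∃ C, ∀ n, ‖L n‖ ≤ C :=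
  banach_steinhaus fun x =>
    let ⟨C, hC⟩ := (hL x).norm.bddAbove_range
    ⟨C, fun n => hC ⟨n, rfl⟩⟩

variable {ι : Type*} {l : Filter ι} [NeBot l]

theorem eq_of_tendsto_comp_right {P : ι → E →L[𝕜] E} (hP : ∀ x, Tendsto (fun n => P n x) l (𝓝 x))
    {T B : E →L[𝕜] F} (h : Tendsto (fun n => T.comp (P n)) l (𝓝 B)) : B = T := by
  ext x
  exact tendsto_nhds_unique (((continuous_eval_const x).tendsto B).comp h)
    ((T.continuous.tendsto x).comp (hP x))

theorem eq_of_tendsto_comp_left {P : ι → F →L[𝕜] F} (hP : ∀ x, Tendsto (fun n => P n x) l (𝓝 x))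
    {T B : E →L[𝕜] F} (h : Tendsto (fun n => (P n).comp T) l (𝓝 B)) : B = T := by
  ext x
  exact tendsto_nhds_unique (((continuous_eval_const x).tendsto B).comp h) (hP (T x))

end Operators

/-- For a bounded linear operator `A` on a Banach space `X` with a Schauder
decomposition with associated projections `P n`, the four conditions (α)-(δ) describing
horizontal approximability are equivalent. -/
theorem stmt0 (X : Type*) [NormedAddCommGroup X] [NormedSpace ℂ X] [CompleteSpace X]
    (P : ℕ → X →L[ℂ] X)
    (hP_proj : ∀ m n, (P m).comp (P n) = P (min m n))
    (hP_lim : ∀ x : X, Tendsto (fun n => P n x) atTop (𝓝 x))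
    (A : X →L[ℂ] X) :
    List.TFAE
      [ Tendsto (fun n => A.comp (P n)) atTop (𝓝 A) ∧
          Tendsto (fun n => (P n).comp A) atTop (𝓝 A),
        ∃ B : ℕ → X →L[ℂ] X,
          (∀ m, Tendsto (fun n => ((P m).comp A).comp (P n)) atTop (𝓝 (B m))) ∧
            Tendsto B atTop (𝓝 A),
        ∃ B : ℕ → X →L[ℂ] X,
          (∀ n, Tendsto (fun m => ((P m).comp A).comp (P n)) atTop (𝓝 (B n))) ∧
            Tendsto B atTop (𝓝 A),
        Tendsto (fun n => ((P n).comp A).comp (P n)) atTop (𝓝 A) ] := by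
  obtain ⟨C, hC⟩ := exists_norm_le_of_tendsto_apply hP_lim
  simp only [← ContinuousLinearMap.mul_def] at hP_proj ⊢
  tfae_have 1 → 2
  | ⟨hright, hleft⟩ =>
    ⟨fun m => P m * A, fun m => by simpa only [mul_assoc] using hright.const_mul (P m), hleft⟩
  tfae_have 1 → 3
  | ⟨hright, hleft⟩ => ⟨fun n => A * P n, fun n => hleft.mul_const (P n), hright⟩
  tfae_have 1 → 4
  | ⟨hright, hleft⟩ => tendsto_mul_mul_of_tendsto_mul (isBoundedUnder_of ⟨C, hC⟩) hright hleft
  tfae_have 2 → 1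
  | ⟨B, hrow, hB⟩ => by
    obtain rfl : B = (P · * A) := funext fun m => eq_of_tendsto_comp_right hP_lim (hrow m)
    exact ⟨tendsto_mul_const_of_tendsto_of_norm_le hC hB hrow, hB⟩
  tfae_have 3 → 1
  | ⟨B, hcol, hB⟩ => by
    simp only [mul_assoc] at hcol
    obtain rfl : B = (A * P ·) := funext fun n => eq_of_tendsto_comp_left hP_lim (hcol n)
    exact ⟨hB, tendsto_const_mul_of_tendsto_of_norm_le hC hB hcol⟩
  tfae_have 4 → 1
  | hdiag => by
    have hright (k) : (fun n => P k * A * P k * P n) =ᶠ[atTop] fun _ => P k * A * P k :=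
by
      filter_upwards [eventually_ge_atTop k] with n hn
      rw [mul_assoc, hP_proj, min_eq_left hn]
    have hleft (k) : (fun n => P n * (P k * A * P k)) =ᶠ[atTop] fun _ => P k * A * P k :=
by
      filter_upwards [eventually_ge_atTop k] with n hn
      rw [← mul_assoc, ← mul_assoc, hP_proj, min_eq_right hn]
    exact ⟨tendsto_mul_const_of_tendsto_of_norm_le hC hdiag
        fun k => tendsto_const_nhds.congr' (hright k).symm,
      tendsto_const_mul_of_tendsto_of_norm_le hC hdiag
        fun k => tendsto_const_nhds.congr' (hleft k).symm⟩
  tfae_finish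
end

section
/- Let X be an infinite dimensional Banach space, let Y = c₀(X) with its standard Schauder decomposition, and let A = (a_{m,n}) be a scalar matrix with all but finitely many entries zero. Define the operator on Y by Â((x_n)_n) = (Σ_n a_{m,n} x_n)_m. Then for every compact operator K : Y → Y, ‖Â − K‖ ≥ ‖A‖_{L(c₀)}. In particular the distance of from K(Y) equals ‖A‖_{L(c₀)}. -/
/-!
By Riesz's lemma an infinite-dimensional space `X` contains a bounded `1`-separated sequence;
a compact operator nearly identifies two of its terms, so it is not bounded below on `X`.
For a row `m`, the contraction `u ↦ (σₙ u)ₙ : X → c₀(X)` with `σₙ = conj aₘₙ / |aₘₙ|` is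
turned by `Â` followed by the `m`-th coordinate into multiplication by `∑ₙ |aₘₙ|`; hence
`‖Â - K‖ ≥ ∑ₙ |aₘₙ|` for every compact `K`. Conversely `‖Â‖ ≤ supₘ ∑ₙ |aₘₙ|`, so `K = 0`
attains the distance.
-/

open Filter Topology ZeroAtInfty

namespace ZeroAtInftyContinuousMap

variable {α β : Type*} [TopologicalSpace α]

theorem norm_apply_le [SeminormedAddCommGroup β] (f : C₀(α, β)) (a : α) : ‖f a‖ ≤ ‖f‖ :=
  f.toBCF.norm_coe_le_norm a

theorem norm_le_of_forall_norm_apply_le [SeminormedAddCommGroup β] {f : C₀(α, β)} {C : ℝ}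
    (hC : 0 ≤ C) (h : ∀ a, ‖f a‖ ≤ C) : ‖f‖ ≤ C :=
  (BoundedContinuousFunction.norm_le hC).2 h

def ofFiniteSupport [DiscreteTopology α] [TopologicalSpace β] [Zero β] (f : α → β)
    (hf : (Function.support f).Finite) : C₀(α, β) where
  toFun := f
  continuous_toFun := continuous_of_discreteTopology
  zero_at_infty' := by
    rw [cocompact_eq_cofinite]
    exact tendsto_nhds_of_eventually_eq (eventually_cofinite.2 hf)

@[simp]
theorem ofFiniteSupport_apply [DiscreteTopology α] [TopologicalSpace β] [Zero β] (f : α → β)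
    (hf : (Function.support f).Finite) (a : α) : ofFiniteSupport f hf a = f a :=
  rfl

theorem norm_tsum_smul_le {𝕜 X ι : Type*} [TopologicalSpace ι] [NormedField 𝕜]
    [SeminormedAddCommGroup X] [NormedSpace 𝕜 X] {a : ι → 𝕜} (ha : Summable fun n => ‖a n‖)
    (x : C₀(ι, X)) : ‖∑' n, a n • x n‖ ≤ (∑' n, ‖a n‖) * ‖x‖ := by
  rw [← tsum_mul_right]
  refine tsum_of_norm_bounded (ha.mul_right ‖x‖).hasSum fun n => ?_
  rw [norm_smul]
  gcongr
  exact x.norm_apply_le n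

variable {𝕜 X : Type*} [NontriviallyNormedField 𝕜] [SeminormedAddCommGroup X] [NormedSpace 𝕜 X]

noncomputable def smulConstCLM (σ : C₀(α, 𝕜)) : X →L[𝕜] C₀(α, X) :=
  LinearMap.mkContinuous
    { toFun := fun u => ⟨⟨fun a => σ a • u, by fun_prop⟩, by
        simpa using σ.zero_at_infty'.smul_const u⟩
      map_add' := fun u w => by ext; simp [smul_add]
      map_smul' := fun c u => by ext; simp [smul_comm c] }
    ‖σ‖ fun u => norm_le_of_forall_norm_apply_le (by positivity) fun a => by
      simpa [norm_smul] using mul_le_mul_of_nonneg_right (σ.norm_apply_le a) (norm_nonneg u)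

@[simp]
theorem smulConstCLM_apply (σ : C₀(α, 𝕜)) (u : X) (a : α) : smulConstCLM σ u a = σ a • u :=
  rfl

theorem norm_smulConstCLM_le (σ : C₀(α, 𝕜)) : ‖(smulConstCLM σ : X →L[𝕜] C₀(α, X))‖ ≤ ‖σ‖ :=
  LinearMap.mkContinuous_norm_le _ (norm_nonneg σ) _

end ZeroAtInftyContinuousMap

open ZeroAtInftyContinuousMap

section CompactOperator

variable {𝕜 X E F : Type*} [NontriviallyNormedField 𝕜] [NormedAddCommGroup X] [NormedSpace 𝕜 X]
  [NormedAddCommGroup E] [NormedSpace 𝕜 E] [NormedAddCommGroup F] [NormedSpace 𝕜 F]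

theorem IsCompactOperator.exists_one_le_norm_and_norm_apply_lt [CompleteSpace 𝕜]
    (hX : ¬FiniteDimensional 𝕜 X) {L : X →L[𝕜] F} (hL : IsCompactOperator L) {ε : ℝ} (hε : 0 < ε) :
    ∃ w : X, 1 ≤ ‖w‖ ∧ ‖L w‖ < ε := by
  obtain ⟨R, f, -, hfR, hf⟩ := exists_seq_norm_le_one_le_norm_sub hX
  have hbdd : Bornology.IsBounded (Set.range f) :=
    isBounded_iff_forall_norm_le.2 ⟨R, by rintro _ ⟨k, rfl⟩; exact hfR k⟩
  obtain ⟨C, hC, hfC⟩ := hL.image_subset_compact_of_bounded (f := (L : X →ₗ[𝕜] F)) hbdd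
  obtain ⟨x, -, φ, hφ, hlim⟩ := hC.tendsto_subseq fun k => hfC ⟨f k, ⟨k, rfl⟩, rfl⟩
  obtain ⟨N, hN⟩ := Metric.cauchySeq_iff'.1 hlim.cauchySeq ε hε
  refine ⟨f (φ (N + 1)) - f (φ N), hf (hφ.injective.ne N.succ_ne_self), ?_⟩
  rw [map_sub, ← dist_eq_norm]
  exact hN (N + 1) N.le_succ

theorem le_opNorm_sub_of_isCompactOperator [CompleteSpace 𝕜] (hX : ¬FiniteDimensional 𝕜 X)
    {V : X →L[𝕜] E} (hV : ‖V‖ ≤ 1) {T K : E →L[𝕜] F} (hK : IsCompactOperator K) {c : ℝ}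
    (hc : ∀ u, c * ‖u‖ ≤ ‖T (V u)‖) : c ≤ ‖T - K‖ := by
  refine le_of_forall_pos_le_add fun ε hε => ?_
  obtain ⟨w, hw, hKw⟩ := IsCompactOperator.exists_one_le_norm_and_norm_apply_lt hX
    (L := K.comp V) (hK.comp_clm V) hε
  have key : c * ‖w‖ ≤ ‖T - K‖ * ‖w‖ + ε :=
    calc c * ‖w‖ ≤ ‖T (V w)‖ := hc w
      _ = ‖(T - K) (V w) + K (V w)‖ := by simp
      _ ≤ ‖(T - K) (V w)‖ + ‖K (V w)‖ := norm_add_le _ _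
      _ ≤ ‖T - K‖ * ‖w‖ + ε := by
        gcongr
        · exact (T - K).le_opNorm_of_le (by simpa using V.le_of_opNorm_le hV w)
        · exact hKw.le
  nlinarith

end CompactOperator

section MatrixOperator

variable {𝕜 X ι κ : Type*} [TopologicalSpace ι] [TopologicalSpace κ]

theorem opNorm_le_iSup_tsum_norm [NontriviallyNormedField 𝕜] [SeminormedAddCommGroup X]
    [NormedSpace 𝕜 X] {A : κ → ι → 𝕜} {T : C₀(ι, X) →L[𝕜] C₀(κ, X)}
    (hT : ∀ x m, T x m = ∑' n, A m n • x n) (hrow : ∀ m, Summable fun n => ‖A m n‖)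
    (hbdd : BddAbove (Set.range fun m => ∑' n, ‖A m n‖)) :
    ‖T‖ ≤ ⨆ m, ∑' n, ‖A m n‖ := by
  have h0 : 0 ≤ ⨆ m, ∑' n, ‖A m n‖ :=
    Real.iSup_nonneg fun m => tsum_nonneg fun n => norm_nonneg _
  refine T.opNorm_le_bound h0 fun x => norm_le_of_forall_norm_apply_le (by positivity) fun m => ?_
  rw [hT]
  exact (norm_tsum_smul_le (hrow m) x).trans (by gcongr; exact le_ciSup hbdd m)

theorem RCLike.mul_conj_div_norm [RCLike 𝕜] (z : 𝕜) : z * (starRingEnd 𝕜 z / ‖z‖) = ‖z‖ := by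
  rcases eq_or_ne z 0 with rfl | hz
  · simp
  · rw [← mul_div_assoc, RCLike.mul_conj]
    field_simp

theorem exists_norm_le_one_tsum_norm_mul_le_norm_apply [RCLike 𝕜] [DiscreteTopology ι]
    [NormedAddCommGroup X] [NormedSpace 𝕜 X] {A : κ → ι → 𝕜} {T : C₀(ι, X) →L[𝕜] C₀(κ, X)}
    (hT : ∀ x m, T x m = ∑' n, A m n • x n) (m : κ) (hm : (Function.support (A m)).Finite) :
    ∃ V : X →L[𝕜] C₀(ι, X), ‖V‖ ≤ 1 ∧ ∀ u, (∑' n, ‖A m n‖) * ‖u‖ ≤ ‖T (V u)‖ := by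
  let σ : C₀(ι, 𝕜) := ofFiniteSupport (fun n => starRingEnd 𝕜 (A m n) / ‖A m n‖)
    (hm.subset fun n hn => by simp_all)
  have hσ : ‖σ‖ ≤ 1 := norm_le_of_forall_norm_apply_le zero_le_one fun n => by
    simpa [σ] using div_self_le_one ‖A m n‖
  refine ⟨smulConstCLM σ, (norm_smulConstCLM_le σ).trans hσ, fun u => ?_⟩
  have hsum : Summable fun n => (‖A m n‖ : 𝕜) :=
    summable_of_hasFiniteSupport (hm.subset fun n hn => by simp_all)
  have hrow : T (smulConstCLM σ u) m = ((∑' n, ‖A m n‖ : ℝ) : 𝕜) • u := by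
    simp only [hT, smulConstCLM_apply, σ, ofFiniteSupport_apply, smul_smul,
      RCLike.mul_conj_div_norm, hsum.tsum_smul_const, RCLike.ofReal_tsum]
  calc (∑' n, ‖A m n‖) * ‖u‖ = ‖T (smulConstCLM σ u) m‖ := by
        rw [hrow, norm_smul, RCLike.norm_ofReal,
          abs_of_nonneg (tsum_nonneg fun n => norm_nonneg _)]
    _ ≤ ‖T (smulConstCLM σ u)‖ := norm_apply_le _ _

end MatrixOperator

theorem stmt6_general (X : Type*) [NormedAddCommGroup X] [NormedSpace ℂ X]
    (hinf : ¬ FiniteDimensional ℂ X)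
    (A : ℕ → ℕ → ℂ) (hA : {p : ℕ × ℕ | A p.1 p.2 ≠ 0}.Finite)
    (Ahat : C₀(ℕ, X) →L[ℂ] C₀(ℕ, X))
    (hAhat : ∀ (x : C₀(ℕ, X)) (m : ℕ), Ahat x m = ∑' n, A m n • x n) :
    (∀ K : C₀(ℕ, X) →L[ℂ] C₀(ℕ, X), IsCompactOperator ⇑K →
        (⨆ m, ∑' n, ‖A m n‖) ≤ ‖Ahat - K‖) ∧
      sInf {r : ℝ | ∃ K : C₀(ℕ, X) →L[ℂ] C₀(ℕ, X),
          IsCompactOperator ⇑K ∧ r = ‖Ahat - K‖} = ⨆ m, ∑' n, ‖A m n‖ := by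
  have hrow (m : ℕ) : (Function.support (A m)).Finite :=
    (hA.image Prod.snd).subset fun n hn => ⟨(m, n), hn, rfl⟩
  have hcol : (Function.support fun m => ∑' n, ‖A m n‖).Finite :=
    (hA.image Prod.fst).subset fun m hm => by
      obtain ⟨n, hn⟩ : ∃ n, A m n ≠ 0 := by
        by_contra! h
        simp [h] at hm
      exact ⟨(m, n), hn, rfl⟩
  have hbdd : BddAbove (Set.range fun m => ∑' n, ‖A m n‖) :=
    (((hcol.image _).insert 0).subset (Function.range_subset_insert_image_support _)).bddAbove
  have upper : ‖Ahat‖ ≤ ⨆ m, ∑' n, ‖A m n‖ :=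
    opNorm_le_iSup_tsum_norm hAhat
      (fun m => summable_of_hasFiniteSupport ((hrow m).subset fun n hn => by simp_all)) hbdd
  have lower (K : C₀(ℕ, X) →L[ℂ] C₀(ℕ, X)) (hK : IsCompactOperator K) :
      (⨆ m, ∑' n, ‖A m n‖) ≤ ‖Ahat - K‖ :=
    ciSup_le fun m => by
      obtain ⟨V, hV, hAV⟩ := exists_norm_le_one_tsum_norm_mul_le_norm_apply hAhat m (hrow m)
      exact le_opNorm_sub_of_isCompactOperator hinf hV hK hAV
  have hleast : IsLeast {r : ℝ | ∃ K : C₀(ℕ, X) →L[ℂ] C₀(ℕ, X),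
      IsCompactOperator ⇑K ∧ r = ‖Ahat - K‖} ‖Ahat‖ :=
    ⟨⟨0, isCompactOperator_zero, by rw [sub_zero]⟩,
      by rintro _ ⟨K, hK, rfl⟩; exact upper.trans (lower K hK)⟩
  refine ⟨lower, hleast.csInf_eq.trans (upper.antisymm ?_)⟩
  simpa using lower 0 isCompactOperator_zero

/-- Let `X` be an infinite dimensional Banach space, `Y = c₀(X)`, and let
`A = (a_{m,n})` be a finitely supported scalar matrix, with associated operator
`Â((x_n)_n) = (Σ_n a_{m,n} x_n)_m` on `Y`. Then for every compact operator `K : Y → Y`,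
`‖Â − K‖ ≥ ‖A‖_{L(c₀)} = sup_m Σ_n |a_{m,n}|`; in particular the distance of `Â` from
`K(Y)` equals `‖A‖_{L(c₀)}`. -/
theorem stmt6 (X : Type*) [NormedAddCommGroup X] [NormedSpace ℂ X] [CompleteSpace X]
    (hinf : ¬ FiniteDimensional ℂ X)
    (A : ℕ → ℕ → ℂ) (hA : {p : ℕ × ℕ | A p.1 p.2 ≠ 0}.Finite)
    (Ahat : C₀(ℕ, X) →L[ℂ] C₀(ℕ, X))
    (hAhat : ∀ (x : C₀(ℕ, X)) (m : ℕ), Ahat x m = ∑' n, A m n • x n) :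
    (∀ K : C₀(ℕ, X) →L[ℂ] C₀(ℕ, X), IsCompactOperator ⇑K →
        (⨆ m, ∑' n, ‖A m n‖) ≤ ‖Ahat - K‖) ∧
      sInf {r : ℝ | ∃ K : C₀(ℕ, X) →L[ℂ] C₀(ℕ, X),
          IsCompactOperator ⇑K ∧ r = ‖Ahat - K‖} = ⨆ m, ∑' n, ‖A m n‖ :=
  stmt6_general X hinf A hA Ahat hAhat
end

section
/- Let X and Y be Banach spaces with C-finitely Fredholm equivalent shrinking Schauder decompositions, for some C ≥ 1. Then the quotient Banach algebras HA(X)/K(X) and HA(Y)/K(Y) are isomorphic as Banach algebras, via an isomorphism Φ̂ with ‖Φ̂‖·‖Φ̂⁻¹‖ ≤ C². -/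
/-!
Work in the Calkin space `B(Y)/K(Y)`. For a horizontally approximable `A`, the classes of
`L n ∘ A ∘ R n` form a Cauchy sequence, since for `m ≤ n` the difference
`L m A R m - L n A R n` is, modulo compacts, `L n (P m A P m - A) R n`. Its limit is the class of
some `Φ A ∈ HA(Y)`: `HA(Y)` is closed, contains `K(Y)` (this is where shrinking is used), and
contains every `L n A R n ≡ Q n (L n A R n) Q n`. Linearity, multiplicativity (through
`R n L n ≡ P n`) and the bound `‖[Φ A]‖ ≤ C ‖[A]‖` pass to the limit. The same construction
with the roles of `(P, L)` and `(Q, R)` exchanged inverts `Φ` modulo compacts, because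
`L n R n ≡ Q n`.
-/

open Filter Topology Metric

section OperatorNorm

variable {ι D E F G : Type*} [NormedAddCommGroup D] [NormedSpace ℂ D] [NormedAddCommGroup E]
  [NormedSpace ℂ E] [NormedAddCommGroup F] [NormedSpace ℂ F] [NormedAddCommGroup G]
  [NormedSpace ℂ G]

theorem ContinuousLinearMap.norm_comp_comp_le (L : F →L[ℂ] G) (A : E →L[ℂ] F) (R : D →L[ℂ] E) :
    ‖(L.comp A).comp R‖ ≤ ‖L‖ * ‖R‖ * ‖A‖ := by
  rw [mul_right_comm]
  exact (opNorm_comp_le _ _).trans (mul_le_mul_of_nonneg_right (opNorm_comp_le _ _) (norm_nonneg _))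

theorem norm_compL_flip_apply_le (T : E →L[ℂ] F) :
    ‖(ContinuousLinearMap.compL ℂ E F G).flip T‖ ≤ ‖T‖ :=
  ContinuousLinearMap.opNorm_le_bound _ (norm_nonneg _) fun _ =>
    (ContinuousLinearMap.opNorm_comp_le _ _).trans_eq (mul_comm _ _)

theorem tendsto_comp_zero_of_norm_le {l : Filter ι} {S : ι → F →L[ℂ] G} {T : ι → E →L[ℂ] F}
    {M : ℝ} (hS : ∀ i, ‖S i‖ ≤ M) (hT : Tendsto T l (𝓝 0)) :
    Tendsto (fun i => (S i).comp (T i)) l (𝓝 0) :=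
  squeeze_zero_norm (fun i => (ContinuousLinearMap.opNorm_comp_le _ _).trans
      (mul_le_mul_of_nonneg_right (hS i) (norm_nonneg _)))
    (by simpa using (tendsto_zero_iff_norm_tendsto_zero.1 hT).const_mul M)

theorem tendsto_zero_comp_of_norm_le {l : Filter ι} {S : ι → F →L[ℂ] G} {T : ι → E →L[ℂ] F}
    {M : ℝ} (hS : Tendsto S l (𝓝 0)) (hT : ∀ i, ‖T i‖ ≤ M) :
    Tendsto (fun i => (S i).comp (T i)) l (𝓝 0) :=
  squeeze_zero_norm (fun i => (ContinuousLinearMap.opNorm_comp_le _ _).trans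
      (mul_le_mul_of_nonneg_left (hT i) (norm_nonneg _)))
    (by simpa using (tendsto_zero_iff_norm_tendsto_zero.1 hS).mul_const M)

theorem isClosed_setOf_tendsto_apply_self {l : Filter ι} {T : ι → E →L[ℂ] E} {M : ℝ}
    (hM : ∀ i, ‖T i‖ ≤ M) : IsClosed {x | Tendsto (fun i => T i x) l (𝓝 x)} := by
  have hT := (NormedSpace.equicontinuous_TFAE T).out 5 1
  exact (hT.1 ⟨M, hM⟩).isClosed_setOfPred_tendsto continuous_id

theorem exists_forall_norm_le_of_tendsto [CompleteSpace E] {T : ℕ → E →L[ℂ] F} {f : E → F}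
    (h : ∀ x, Tendsto (fun n => T n x) atTop (𝓝 (f x))) : ∃ M, ∀ n, ‖T n‖ ≤ M :=
  banach_steinhaus fun x => (h x).norm.bddAbove_range.imp fun _ hc n => hc ⟨n, rfl⟩

end OperatorNorm

theorem tendsto_of_forall_eventually_norm_sub_le {ι E : Type*} [SeminormedAddCommGroup E]
    {l : Filter ι} {f : ι → E} {a : E} (h : ∀ ε > 0, ∀ᶠ i in l, ‖f i - a‖ ≤ ε) :
    Tendsto f l (𝓝 a) :=
  Metric.tendsto_nhds.2 fun ε hε =>
    (h _ (half_pos hε)).mono fun i hi => by rw [dist_eq_norm]; linarith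

section CalkinSpace

variable {ι E F : Type*} [NormedAddCommGroup E] [NormedSpace ℂ E]
  [NormedAddCommGroup F] [NormedSpace ℂ F]

/- A `def` rather than an `abbrev`: through the reducible quotient, norms and limits in
`Calkin E` would be elaborated against the quotient-module topology instead of the norm. -/
variable (E) in
def Calkin : Type _ := (E →L[ℂ] E) ⧸ compactOperator (RingHom.id ℂ) E E

namespace Calkin

noncomputable instance : SeminormedAddCommGroup (Calkin E) :=
  Submodule.Quotient.seminormedAddCommGroup _

noncomputable instance : NormedSpace ℂ (Calkin E) :=
  Submodule.Quotient.normedSpace _ ℂ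

noncomputable instance [CompleteSpace E] : NormedAddCommGroup (Calkin E) :=
  Submodule.Quotient.normedAddCommGroup (hS := isClosed_setOfPred_isCompactOperator) _

instance [CompleteSpace E] : CompleteSpace (Calkin E) :=
  Submodule.Quotient.completeSpace _

def mk : (E →L[ℂ] E) →ₗ[ℂ] Calkin E := Submodule.mkQ _

theorem mk_eq_mk_iff {A B : E →L[ℂ] E} : mk A = mk B ↔ IsCompactOperator ⇑(A - B) :=
  Submodule.Quotient.eq _

theorem norm_mk_le_norm (A : E →L[ℂ] E) : ‖mk A‖ ≤ ‖A‖ :=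
  Submodule.Quotient.norm_mk_le _ A

theorem norm_mk_eq_sInf (A : E →L[ℂ] E) :
    ‖mk A‖ = sInf {r : ℝ | ∃ K : E →L[ℂ] E, IsCompactOperator ⇑K ∧ r = ‖A - K‖} := by
  change ‖(A : (E →L[ℂ] E) ⧸ (compactOperator (RingHom.id ℂ) E E).toAddSubgroup)‖ = _
  rw [QuotientAddGroup.norm_mk, Metric.infDist_eq_iInf, iInf]
  congr 1
  ext r
  simp [dist_eq_norm, eq_comm]
  rfl

theorem mk_sandwich_eq_of_compact_sub {L L' : E →L[ℂ] F} {R R' : F →L[ℂ] E}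
    (hL : IsCompactOperator ⇑(L - L')) (hR : IsCompactOperator ⇑(R - R')) (A : E →L[ℂ] E) :
    mk ((L.comp A).comp R) = mk ((L'.comp A).comp R') := by
  rw [mk_eq_mk_iff]
  have : (L.comp A).comp R - (L'.comp A).comp R'
      = ((L - L').comp A).comp R + (L'.comp A).comp (R - R') := by
    simp only [ContinuousLinearMap.sub_comp, ContinuousLinearMap.comp_sub]; abel
  rw [this]
  exact ((hL.comp_clm A).comp_clm R).add (hR.clm_comp (L'.comp A))

theorem mk_sandwich_eq_of_compact_sub_middle (L : E →L[ℂ] F) {A A' : E →L[ℂ] E} (R : F →L[ℂ] E)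
    (hA : IsCompactOperator ⇑(A - A')) : mk ((L.comp A).comp R) = mk ((L.comp A').comp R) := by
  rw [mk_eq_mk_iff, ← ContinuousLinearMap.sub_comp, ← ContinuousLinearMap.comp_sub]
  exact (hA.clm_comp L).comp_clm R

theorem norm_mk_sandwich_le (L : E →L[ℂ] F) (A : E →L[ℂ] E) (R : F →L[ℂ] E) :
    ‖mk ((L.comp A).comp R)‖ ≤ ‖L‖ * ‖R‖ * ‖mk A‖ := by
  refine le_of_forall_pos_le_add fun ε hε => ?_
  have hδ : 0 < ε / (‖L‖ * ‖R‖ + 1) := by positivity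
  obtain ⟨A', hA', hlt⟩ := Submodule.Quotient.norm_mk_lt (mk A) hδ
  have hc : ‖L‖ * ‖R‖ * (ε / (‖L‖ * ‖R‖ + 1)) ≤ ε := by
    rw [mul_div_assoc', div_le_iff₀ (by positivity)]; nlinarith [hε.le]
  calc ‖mk ((L.comp A).comp R)‖ = ‖mk ((L.comp A').comp R)‖ := by
        rw [mk_sandwich_eq_of_compact_sub_middle L R (mk_eq_mk_iff.1 hA'.symm)]
    _ ≤ ‖L‖ * ‖R‖ * ‖A'‖ := (norm_mk_le_norm _).trans (L.norm_comp_comp_le A' R)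
    _ ≤ ‖L‖ * ‖R‖ * (‖mk A‖ + ε / (‖L‖ * ‖R‖ + 1)) := by gcongr; exact hlt.le
    _ ≤ ‖L‖ * ‖R‖ * ‖mk A‖ + ε := by rw [mul_add]; gcongr

theorem continuous_mk : Continuous (mk : (E →L[ℂ] E) → Calkin E) :=
  AddMonoidHomClass.continuous_of_bound mk 1 fun A => by simpa using norm_mk_le_norm A

theorem isClosed_image_mk {H : Submodule ℂ (E →L[ℂ] E)}
    (hK : compactOperator (RingHom.id ℂ) E E ≤ H) (hH : IsClosed (H : Set (E →L[ℂ] E))) :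
    IsClosed (mk '' (H : Set (E →L[ℂ] E))) := by
  refine ((Submodule.isOpenQuotientMap_mkQ (compactOperator (RingHom.id ℂ) E E)).isQuotientMap
    |>.isClosed_preimage (s := mk '' (H : Set (E →L[ℂ] E)))).1 ?_
  convert hH
  ext A
  refine ⟨fun ⟨B, hB, hBA⟩ => ?_, fun hA => ⟨A, hA, rfl⟩⟩
  simpa using H.add_mem hB (hK (mk_eq_mk_iff.1 hBA.symm))

theorem norm_mk_comp_le_left (S T : E →L[ℂ] E) : ‖mk (S.comp T)‖ ≤ ‖S‖ * ‖mk T‖ := by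
  simpa using (norm_mk_sandwich_le S T (.id ℂ E)).trans
    (by gcongr; exact mul_le_of_le_one_right (norm_nonneg _) ContinuousLinearMap.norm_id_le)

theorem norm_mk_comp_le_right (S T : E →L[ℂ] E) : ‖mk (S.comp T)‖ ≤ ‖mk S‖ * ‖T‖ := by
  simpa [mul_comm] using (norm_mk_sandwich_le (.id ℂ E) S T).trans
    (by gcongr; exact mul_le_of_le_one_left (norm_nonneg _) ContinuousLinearMap.norm_id_le)

theorem tendsto_mk_comp {l : Filter ι} {F G : ι → E →L[ℂ] E} {S T : E →L[ℂ] E} {M : ℝ}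
    (hF : Tendsto (fun i => mk (F i)) l (𝓝 (mk S))) (hG : Tendsto (fun i => mk (G i)) l (𝓝 (mk T)))
    (hM : ∀ i, ‖F i‖ ≤ M) :
    Tendsto (fun i => mk ((F i).comp (G i))) l (𝓝 (mk (S.comp T))) := by
  replace hF := tendsto_iff_norm_sub_tendsto_zero.1 hF
  replace hG := tendsto_iff_norm_sub_tendsto_zero.1 hG
  refine tendsto_iff_norm_sub_tendsto_zero.2 <| squeeze_zero (fun _ => norm_nonneg _) (fun i => ?_)
    (by simpa using (hG.const_mul M).add (hF.mul_const ‖T‖))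
  have : (F i).comp (G i) - S.comp T = (F i).comp (G i - T) + (F i - S).comp T := by
    simp only [ContinuousLinearMap.comp_sub, ContinuousLinearMap.sub_comp]; abel
  rw [← map_sub, this, map_add]
  refine (norm_add_le _ _).trans (add_le_add ?_ ?_)
  · rw [← map_sub]
    exact (norm_mk_comp_le_left _ _).trans (by gcongr; exact hM i)
  · rw [← map_sub]
    exact norm_mk_comp_le_right _ _

end Calkin

end CalkinSpace

section UniformConvergence

variable {ι E F : Type*} [NormedAddCommGroup E] [NormedSpace ℂ E]
  [NormedAddCommGroup F] [NormedSpace ℂ F]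

theorem TotallyBounded.eventually_forall_norm_apply_le {l : Filter ι} {T : ι → E →L[ℂ] F} {M : ℝ}
    (hM : ∀ i, ‖T i‖ ≤ M) (hT : ∀ x, Tendsto (fun i => T i x) l (𝓝 0)) {S : Set E}
    (hS : TotallyBounded S) {ε : ℝ} (hε : 0 < ε) : ∀ᶠ i in l, ∀ x ∈ S, ‖T i x‖ ≤ ε := by
  obtain ⟨M, hM0, hM⟩ : ∃ M ≥ 0, ∀ i, ‖T i‖ ≤ M :=
    ⟨max M 0, le_max_right _ _, fun i => (hM i).trans (le_max_left _ _)⟩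
  have hδ : 0 < ε / (2 * (M + 1)) := by positivity
  obtain ⟨t, ht, hSt⟩ := totallyBounded_iff.1 hS _ hδ
  have hnet : ∀ᶠ i in l, ∀ y ∈ t, ‖T i y‖ ≤ ε / 2 :=
    (eventually_all_finite ht).2 fun y _ =>
      (by simpa using (hT y).norm : Tendsto (‖T · y‖) l (𝓝 0)).eventually_le_const (half_pos hε)
  filter_upwards [hnet] with i hi x hx
  obtain ⟨y, hy, hxy⟩ := Set.mem_iUnion₂.1 (hSt hx)
  have hMδ : M * (ε / (2 * (M + 1))) ≤ ε / 2 := by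
    rw [mul_div_assoc', div_le_div_iff₀ (by positivity) (by positivity)]; nlinarith
  calc ‖T i x‖ = ‖T i (x - y) + T i y‖ := by rw [← map_add, sub_add_cancel]
    _ ≤ M * ‖x - y‖ + ε / 2 :=
      (norm_add_le _ _).trans (add_le_add ((T i).le_of_opNorm_le (hM i) _) (hi y hy))
    _ ≤ M * (ε / (2 * (M + 1))) + ε / 2 := by
      gcongr; exact (dist_eq_norm x y ▸ mem_ball.1 hxy).le
    _ ≤ ε := by linarith

theorem norm_comp_sub_comp_le_of_forall_mem_net {K : E →L[ℂ] F} {t : Set F} {δ : ℝ} (hδ : 0 ≤ δ)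
    (ht : K '' closedBall 0 1 ⊆ ⋃ y ∈ t, ball y δ) {g h : F →L[ℂ] ℂ} (hg : ‖g‖ ≤ 1)
    (hh : ‖h‖ ≤ 1) (hgh : ∀ y ∈ t, ‖g y - h y‖ ≤ δ) : ‖g.comp K - h.comp K‖ ≤ 3 * δ := by
  refine ContinuousLinearMap.opNorm_le_of_unit_norm (by positivity) fun x hx => ?_
  obtain ⟨y, hy, hxy⟩ := Set.mem_iUnion₂.1 (ht ⟨x, by simp [hx], rfl⟩)
  have hgh2 : ‖g - h‖ ≤ 2 := (norm_sub_le _ _).trans (by linarith)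
  calc ‖(g.comp K - h.comp K) x‖ = ‖(g - h) (K x - y) + (g y - h y)‖ := by
        simp only [map_sub, sub_apply, ContinuousLinearMap.comp_apply]; abel_nf
    _ ≤ 2 * δ + δ := (norm_add_le _ _).trans (add_le_add
      ((g - h).le_of_opNorm_le hgh2 _ |>.trans
        (by gcongr; exact (dist_eq_norm (K x) y ▸ mem_ball.1 hxy).le)) (hgh y hy))
    _ = 3 * δ := by ring

/- Schauder's theorem, in dual form: evaluation on a finite `ε / 4`-net of
`K '' closedBall 0 1` maps the dual ball to a bounded set of a finite-dimensional space, and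
functionals close on the net are `3ε/4`-close after composition with `K`. -/
theorem IsCompactOperator.totallyBounded_image_comp_closedBall {K : E →L[ℂ] F}
    (hK : IsCompactOperator K) :
    TotallyBounded ((fun g : F →L[ℂ] ℂ => g.comp K) '' closedBall 0 1) := by
  refine totallyBounded_iff.2 fun ε hε => ?_
  have hδ : 0 < ε / 4 := by positivity
  obtain ⟨t, ht, hKt⟩ := totallyBounded_iff.1
    ((hK.isCompact_closure_image_closedBall (𝕜₁ := ℂ) 1).totallyBounded.subset subset_closure)
    _ hδ
  have := ht.fintype
  let Θ : (F →L[ℂ] ℂ) →L[ℂ] (t → ℂ) :=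
    ContinuousLinearMap.pi fun y => ContinuousLinearMap.apply ℂ ℂ (y : F)
  have hΘ : TotallyBounded (Θ '' closedBall 0 1) :=
    (Θ.lipschitz.isBounded_image isBounded_closedBall).isCompact_closure.totallyBounded.subset
      subset_closure
  obtain ⟨u, hu, hufin, hcov⟩ := Set.exists_subset_image_finite_and.1
    (finite_approx_of_totallyBounded hΘ _ hδ)
  refine ⟨(fun g : F →L[ℂ] ℂ => g.comp K) '' u, hufin.image _, ?_⟩
  rintro _ ⟨g, hg, rfl⟩
  obtain ⟨_, ⟨h, hu', rfl⟩, hgh⟩ := Set.mem_iUnion₂.1 (hcov ⟨g, hg, rfl⟩)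
  refine Set.mem_iUnion₂.2 ⟨h.comp K, ⟨h, hu', rfl⟩, mem_ball.2 ?_⟩
  rw [dist_eq_norm]
  refine (norm_comp_sub_comp_le_of_forall_mem_net hδ.le hKt (by simpa using hg)
    (by simpa using hu hu') fun y hy => ?_).trans_lt (by linarith)
  simpa [Θ, ← dist_eq_norm] using (dist_le_pi_dist (Θ g) (Θ h) ⟨y, hy⟩).trans (mem_ball.1 hgh).le

end UniformConvergence

section HorizApprox

variable {E F : Type*} [NormedAddCommGroup E] [NormedSpace ℂ E]
  [NormedAddCommGroup F] [NormedSpace ℂ F]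

variable (P : ℕ → E →L[ℂ] E)

def horizApprox : Submodule ℂ (E →L[ℂ] E) where
  carrier := {A | Tendsto (fun n => ((P n).comp A).comp (P n)) atTop (𝓝 A)}
  add_mem' {A B} hA hB := by
    simpa only [Set.mem_ofPred_eq, ContinuousLinearMap.comp_add, ContinuousLinearMap.add_comp]
      using hA.add hB
  zero_mem' := by simp
  smul_mem' c A hA := by
    simpa only [Set.mem_ofPred_eq, ContinuousLinearMap.comp_smul, ContinuousLinearMap.smul_comp]
      using hA.const_smul c

variable {P} {M : ℝ}

theorem mem_horizApprox {A : E →L[ℂ] E} :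
    A ∈ horizApprox P ↔ Tendsto (fun n => ((P n).comp A).comp (P n)) atTop (𝓝 A) :=
  Iff.rfl

theorem isClosed_horizApprox (hM : ∀ n, ‖P n‖ ≤ M) :
    IsClosed (horizApprox P : Set (E →L[ℂ] E)) := by
  have hM0 : 0 ≤ M := (norm_nonneg _).trans (hM 0)
  let T (n : ℕ) : (E →L[ℂ] E) →L[ℂ] (E →L[ℂ] E) :=
    (ContinuousLinearMap.compL ℂ E E E (P n)).comp ((ContinuousLinearMap.compL ℂ E E E).flip (P n))
  refine isClosed_setOf_tendsto_apply_self (T := T) (M := M * M) fun n =>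
    ContinuousLinearMap.opNorm_le_bound _ (by positivity) fun A => ?_
  exact ((P n).norm_comp_comp_le A (P n)).trans (by gcongr <;> exact hM n)

theorem comp_comp_mem_horizApprox (hP : ∀ m n, (P m).comp (P n) = P (min m n)) (n : ℕ)
    (T : E →L[ℂ] E) : ((P n).comp T).comp (P n) ∈ horizApprox P := by
  refine tendsto_atTop_of_eventually_const (i₀ := n) fun j hj => ?_
  rw [← ContinuousLinearMap.comp_assoc, ← ContinuousLinearMap.comp_assoc, hP, min_eq_right hj,
    ContinuousLinearMap.comp_assoc, hP, min_eq_left hj]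

/- The `f` with `f ∘ P n → f` form a closed set (the maps `f ↦ f ∘ P n` are equicontinuous)
containing every `g ∘ P m`, which are eventually fixed. -/
theorem tendsto_comp_dual (hP : ∀ m n, (P m).comp (P n) = P (min m n)) (hM : ∀ n, ‖P n‖ ≤ M)
    (hshr : Dense (⋃ n, Set.range fun f : E →L[ℂ] ℂ => f.comp (P n))) (f : E →L[ℂ] ℂ) :
    Tendsto (fun n => f.comp (P n)) atTop (𝓝 f) := by
  have hclosed := isClosed_setOf_tendsto_apply_self (l := atTop)
    (T := fun n => (ContinuousLinearMap.compL ℂ E E ℂ).flip (P n)) fun n =>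
      (norm_compL_flip_apply_le _).trans (hM n)
  refine hclosed.closure_subset_iff.2 ?_ (hshr f)
  rintro _ ⟨_, ⟨m, rfl⟩, g, rfl⟩
  refine tendsto_atTop_of_eventually_const (i₀ := m) fun n hn => ?_
  change (g.comp (P m)).comp (P n) = g.comp (P m)
  rw [ContinuousLinearMap.comp_assoc, hP, min_eq_left hn]

theorem tendsto_comp_of_isCompactOperator (hM : ∀ n, ‖P n‖ ≤ M)
    (hlim : ∀ x, Tendsto (fun n => P n x) atTop (𝓝 x)) {K : F →L[ℂ] E}
    (hK : IsCompactOperator K) : Tendsto (fun n => (P n).comp K) atTop (𝓝 K) := by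
  refine tendsto_of_forall_eventually_norm_sub_le fun ε hε => ?_
  have hT (x : E) : Tendsto (fun n => (P n - .id ℂ E) x) atTop (𝓝 0) := by
    simpa using (hlim x).sub_const x
  have hbd (n : ℕ) : ‖P n - .id ℂ E‖ ≤ M + 1 :=
    (norm_sub_le _ _).trans (add_le_add (hM n) ContinuousLinearMap.norm_id_le)
  have hKB : TotallyBounded (K '' closedBall 0 1) :=
    (hK.isCompact_closure_image_closedBall (𝕜₁ := ℂ) 1).totallyBounded.subset subset_closure
  filter_upwards [hKB.eventually_forall_norm_apply_le hbd hT hε] with n hn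
  refine ContinuousLinearMap.opNorm_le_of_unit_norm hε.le fun x hx => ?_
  simpa using hn (K x) ⟨x, by simp [hx], rfl⟩

/- By Hahn–Banach, `‖(K ∘ P n - K) x‖` is attained by some `g` with `‖g‖ ≤ 1`, and
`g ∘ (K ∘ P n - K) = (g ∘ K) ∘ P n - g ∘ K` is small uniformly in `g`, as the `g ∘ K` form a
totally bounded set. -/
theorem tendsto_comp_right_of_isCompactOperator (hP : ∀ m n, (P m).comp (P n) = P (min m n))
    (hM : ∀ n, ‖P n‖ ≤ M) (hshr : Dense (⋃ n, Set.range fun f : E →L[ℂ] ℂ => f.comp (P n)))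
    {K : E →L[ℂ] F} (hK : IsCompactOperator K) :
    Tendsto (fun n => K.comp (P n)) atTop (𝓝 K) := by
  refine tendsto_of_forall_eventually_norm_sub_le fun ε hε => ?_
  let T (n : ℕ) : (E →L[ℂ] ℂ) →L[ℂ] (E →L[ℂ] ℂ) :=
    (ContinuousLinearMap.compL ℂ E E ℂ).flip (P n) - .id ℂ _
  have hT (g : E →L[ℂ] ℂ) : Tendsto (fun n => T n g) atTop (𝓝 0) := by
    simpa [T] using (tendsto_comp_dual hP hM hshr g).sub_const g
  have hbd (n : ℕ) : ‖T n‖ ≤ M + 1 := (norm_sub_le _ _).trans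
    (add_le_add ((norm_compL_flip_apply_le _).trans (hM n)) ContinuousLinearMap.norm_id_le)
  filter_upwards [hK.totallyBounded_image_comp_closedBall.eventually_forall_norm_apply_le hbd hT hε]
    with n hn
  refine ContinuousLinearMap.opNorm_le_of_unit_norm hε.le fun x hx => ?_
  obtain ⟨g, hg, hgx⟩ := exists_dual_vector'' ℂ ((K.comp (P n) - K) x)
  calc ‖(K.comp (P n) - K) x‖ = ‖g ((K.comp (P n) - K) x)‖ := by
        rw [hgx]; simp
    _ = ‖T n (g.comp K) x‖ := by simp [T]
    _ ≤ ‖T n (g.comp K)‖ * ‖x‖ := ContinuousLinearMap.le_opNorm _ _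
    _ ≤ ε := by rw [hx, mul_one]; exact hn _ ⟨g, by simpa using hg, rfl⟩

theorem compactOperator_le_horizApprox (hP : ∀ m n, (P m).comp (P n) = P (min m n))
    (hM : ∀ n, ‖P n‖ ≤ M) (hlim : ∀ x, Tendsto (fun n => P n x) atTop (𝓝 x))
    (hshr : Dense (⋃ n, Set.range fun f : E →L[ℂ] ℂ => f.comp (P n))) :
    compactOperator (RingHom.id ℂ) E E ≤ horizApprox P := fun K hK => by
  have h := (tendsto_comp_zero_of_norm_le hM (tendsto_sub_nhds_zero_iff.2
    (tendsto_comp_right_of_isCompactOperator hP hM hshr hK))).add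
    (tendsto_comp_of_isCompactOperator hM hlim hK)
  rw [mem_horizApprox]
  simpa [ContinuousLinearMap.comp_sub, ContinuousLinearMap.comp_assoc] using h

theorem tendsto_comp_right_of_mem_horizApprox (hP : ∀ m n, (P m).comp (P n) = P (min m n))
    (hM : ∀ n, ‖P n‖ ≤ M) {A : E →L[ℂ] E} (hA : A ∈ horizApprox P) :
    Tendsto (fun n => A.comp (P n)) atTop (𝓝 A) := by
  have h := (tendsto_zero_comp_of_norm_le (tendsto_sub_nhds_zero_iff.2 hA) hM).neg.add hA
  refine (by simpa using h : Tendsto _ atTop (𝓝 A)).congr fun n => ?_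
  rw [ContinuousLinearMap.comp_assoc _ (P n), hP, min_self, sub_add_cancel]

theorem tendsto_comp_left_of_mem_horizApprox (hP : ∀ m n, (P m).comp (P n) = P (min m n))
    (hM : ∀ n, ‖P n‖ ≤ M) {A : E →L[ℂ] E} (hA : A ∈ horizApprox P) :
    Tendsto (fun n => (P n).comp A) atTop (𝓝 A) := by
  have h := (tendsto_comp_zero_of_norm_le hM (tendsto_sub_nhds_zero_iff.2
    (tendsto_comp_right_of_mem_horizApprox hP hM hA))).neg.add hA
  refine (by simpa using h : Tendsto _ atTop (𝓝 A)).congr fun n => ?_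
  rw [← ContinuousLinearMap.comp_assoc, sub_add_cancel]

theorem comp_mem_horizApprox (hP : ∀ m n, (P m).comp (P n) = P (min m n))
    (hM : ∀ n, ‖P n‖ ≤ M) {A B : E →L[ℂ] E} (hA : A ∈ horizApprox P) (hB : B ∈ horizApprox P) :
    A.comp B ∈ horizApprox P := by
  have h := ((continuous_fst.clm_comp continuous_snd).tendsto (A, B)).comp
    ((tendsto_comp_left_of_mem_horizApprox hP hM hA).prodMk_nhds
      (tendsto_comp_right_of_mem_horizApprox hP hM hB))
  rw [mem_horizApprox]
  simpa [Function.comp_def, ContinuousLinearMap.comp_assoc] using h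

end HorizApprox

section FredholmEquivalence

variable {X Y : Type*} [NormedAddCommGroup X] [NormedSpace ℂ X]
  [NormedAddCommGroup Y] [NormedSpace ℂ Y]

theorem norm_mk_sandwich_sub_mk_sandwich_le {L L' : X →L[ℂ] Y} {R R' : Y →L[ℂ] X} {P : X →L[ℂ] X}
    (hL : IsCompactOperator ⇑(L - L'.comp P)) (hR : IsCompactOperator ⇑(R - P.comp R'))
    (A : X →L[ℂ] X) :
    ‖Calkin.mk ((L.comp A).comp R) - Calkin.mk ((L'.comp A).comp R')‖
      ≤ ‖L'‖ * ‖R'‖ * ‖(P.comp A).comp P - A‖ := by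
  rw [Calkin.mk_sandwich_eq_of_compact_sub hL hR, ← map_sub]
  have : ((L'.comp P).comp A).comp (P.comp R') - (L'.comp A).comp R'
      = (L'.comp ((P.comp A).comp P - A)).comp R' := by
    ext x; simp
  rw [this]
  exact (Calkin.norm_mk_le_norm _).trans (L'.norm_comp_comp_le _ _)

theorem sandwich_mem_horizApprox {Q : ℕ → Y →L[ℂ] Y} (hQ : ∀ m n, (Q m).comp (Q n) = Q (min m n))
    (hK : compactOperator (RingHom.id ℂ) Y Y ≤ horizApprox Q) {n : ℕ} {L : X →L[ℂ] Y}
    {R : Y →L[ℂ] X} (hL : IsCompactOperator ⇑(L - (Q n).comp L))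
    (hR : IsCompactOperator ⇑(R - R.comp (Q n))) (A : X →L[ℂ] X) :
    (L.comp A).comp R ∈ horizApprox Q := by
  have hmem := comp_comp_mem_horizApprox hQ n ((L.comp A).comp R)
  have hdiff : IsCompactOperator
      ⇑((L.comp A).comp R - ((Q n).comp ((L.comp A).comp R)).comp (Q n)) := by
    refine Calkin.mk_eq_mk_iff.1 ?_
    rw [Calkin.mk_sandwich_eq_of_compact_sub hL hR]
    rfl
  simpa using (horizApprox Q).add_mem (hK hdiff) hmem

def IsCalkinLimit (L : ℕ → X →L[ℂ] Y) (R : ℕ → Y →L[ℂ] X) (A : X →L[ℂ] X) (B : Y →L[ℂ] Y) :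
    Prop :=
  Tendsto (fun n => Calkin.mk (((L n).comp A).comp (R n))) atTop (𝓝 (Calkin.mk B))

namespace IsCalkinLimit

variable {L : ℕ → X →L[ℂ] Y} {R : ℕ → Y →L[ℂ] X} {A A' : X →L[ℂ] X} {B B' : Y →L[ℂ] Y}
  {cL cR : ℝ}

theorem add (h : IsCalkinLimit L R A B) (h' : IsCalkinLimit L R A' B') :
    IsCalkinLimit L R (A + A') (B + B') := by
  simpa only [IsCalkinLimit, ContinuousLinearMap.comp_add, ContinuousLinearMap.add_comp, map_add]
    using Tendsto.add h h'

theorem smul (h : IsCalkinLimit L R A B) (c : ℂ) : IsCalkinLimit L R (c • A) (c • B) := by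
  simpa only [IsCalkinLimit, ContinuousLinearMap.comp_smul, ContinuousLinearMap.smul_comp,
    map_smul] using Tendsto.const_smul h c

theorem mk_eq [CompleteSpace Y] (h : IsCalkinLimit L R A B) (h' : IsCalkinLimit L R A B') :
    Calkin.mk B = Calkin.mk B' :=
  tendsto_nhds_unique h h'

theorem norm_mk_le (h : IsCalkinLimit L R A B) (hL : ∀ n, ‖L n‖ ≤ cL) (hR : ∀ n, ‖R n‖ ≤ cR) :
    ‖Calkin.mk B‖ ≤ cL * cR * ‖Calkin.mk A‖ :=
  le_of_tendsto' (Tendsto.norm h) fun n => (Calkin.norm_mk_sandwich_le _ _ _).trans <| by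
    have hcL : 0 ≤ cL := (norm_nonneg _).trans (hL n)
    gcongr
    exacts [hL n, hR n]

/- Modulo compacts `(L n A R n) (L n A' R n) = L n A (R n L n) A' R n ≡ L n A (P n A') R n`,
and `P n ∘ A' → A'`. -/
theorem comp {P : ℕ → X →L[ℂ] X} {MP : ℝ} (hP : ∀ m n, (P m).comp (P n) = P (min m n))
    (hMP : ∀ n, ‖P n‖ ≤ MP) (hL : ∀ n, ‖L n‖ ≤ cL) (hR : ∀ n, ‖R n‖ ≤ cR)
    (hRL : ∀ n, IsCompactOperator ⇑((R n).comp (L n) - P n)) (h : IsCalkinLimit L R A B)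
    (h' : IsCalkinLimit L R A' B') (hA' : A' ∈ horizApprox P) :
    IsCalkinLimit L R (A.comp A') (B.comp B') := by
  have hcL : 0 ≤ cL := (norm_nonneg _).trans (hL 0)
  have hcR : 0 ≤ cR := (norm_nonneg _).trans (hR 0)
  have hprod := Calkin.tendsto_mk_comp h h' (M := cL * cR * ‖A‖) fun n =>
    ((L n).norm_comp_comp_le A (R n)).trans (by gcongr; exacts [hL n, hR n])
  refine hprod.congr_dist (squeeze_zero (fun _ => dist_nonneg) (fun n => ?_)
    (by simpa using ((tendsto_sub_nhds_zero_iff.2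
      (tendsto_comp_left_of_mem_horizApprox hP hMP hA')).norm.const_mul ‖A‖).const_mul (cL * cR)))
  have e₁ : (((L n).comp A).comp (R n)).comp (((L n).comp A').comp (R n))
      = (((L n).comp A).comp ((R n).comp (L n))).comp (A'.comp (R n)) := by
    ext; simp
  have e₂ : (((L n).comp A).comp (P n)).comp (A'.comp (R n)) - ((L n).comp (A.comp A')).comp (R n)
      = ((L n).comp (A.comp ((P n).comp A' - A'))).comp (R n) := by
    ext; simp
  rw [dist_eq_norm, e₁, Calkin.mk_sandwich_eq_of_compact_sub_middle _ _ (hRL n), ← map_sub, e₂]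
  refine (Calkin.norm_mk_le_norm _).trans (((L n).norm_comp_comp_le _ _).trans ?_)
  gcongr
  exacts [hL n, hR n, ContinuousLinearMap.opNorm_comp_le _ _]

/- Modulo compacts `L n (R n B L n) R n ≡ Q n B Q n`, which tends to `B`. -/
theorem of_symm {Q : ℕ → Y →L[ℂ] Y} (hL : ∀ n, ‖L n‖ ≤ cL) (hR : ∀ n, ‖R n‖ ≤ cR)
    (hLR : ∀ n, IsCompactOperator ⇑((L n).comp (R n) - Q n)) (hB : B ∈ horizApprox Q)
    (h : IsCalkinLimit R L B A) : IsCalkinLimit L R A B := by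
  have hcL : 0 ≤ cL := (norm_nonneg _).trans (hL 0)
  have hQBQ : Tendsto (fun n => Calkin.mk (((L n).comp (((R n).comp B).comp (L n))).comp (R n)))
      atTop (𝓝 (Calkin.mk B)) := by
    refine ((Calkin.continuous_mk.tendsto B).comp hB).congr fun n => ?_
    have e : ((L n).comp (((R n).comp B).comp (L n))).comp (R n)
        = (((L n).comp (R n)).comp B).comp ((L n).comp (R n)) := by
      ext; simp
    rw [e, Calkin.mk_sandwich_eq_of_compact_sub (hLR n) (hLR n)]
    rfl
  refine hQBQ.congr_dist (squeeze_zero (fun _ => dist_nonneg) (fun n => ?_)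
    (by simpa using (tendsto_iff_norm_sub_tendsto_zero.1 h).const_mul (cL * cR)))
  rw [dist_eq_norm, ← map_sub, ← ContinuousLinearMap.sub_comp, ← ContinuousLinearMap.comp_sub]
  refine (Calkin.norm_mk_sandwich_le _ _ _).trans ?_
  rw [map_sub]
  gcongr
  exacts [hL n, hR n]

end IsCalkinLimit

structure IsFinitelyFredholmEquiv (P : ℕ → X →L[ℂ] X) (Q : ℕ → Y →L[ℂ] Y) (L : ℕ → X →L[ℂ] Y)
    (R : ℕ → Y →L[ℂ] X) : Prop where
  bddAbove_norm_L : BddAbove (Set.range fun n => ‖L n‖)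
  bddAbove_norm_R : BddAbove (Set.range fun n => ‖R n‖)
  L_sub_L_comp_P : ∀ m n, m ≤ n → IsCompactOperator ⇑(L m - (L n).comp (P m))
  L_sub_Q_comp_L : ∀ m n, m ≤ n → IsCompactOperator ⇑(L m - (Q m).comp (L n))
  R_sub_R_comp_Q : ∀ m n, m ≤ n → IsCompactOperator ⇑(R m - (R n).comp (Q m))
  R_sub_P_comp_R : ∀ m n, m ≤ n → IsCompactOperator ⇑(R m - (P m).comp (R n))
  R_comp_L_sub_P : ∀ n, IsCompactOperator ⇑((R n).comp (L n) - P n)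
  L_comp_R_sub_Q : ∀ n, IsCompactOperator ⇑((L n).comp (R n) - Q n)

namespace IsFinitelyFredholmEquiv

variable {P : ℕ → X →L[ℂ] X} {Q : ℕ → Y →L[ℂ] Y} {L : ℕ → X →L[ℂ] Y} {R : ℕ → Y →L[ℂ] X}

theorem symm (h : IsFinitelyFredholmEquiv P Q L R) : IsFinitelyFredholmEquiv Q P R L :=
  ⟨h.bddAbove_norm_R, h.bddAbove_norm_L, h.R_sub_R_comp_Q, h.R_sub_P_comp_R, h.L_sub_L_comp_P,
    h.L_sub_Q_comp_L, h.L_comp_R_sub_Q, h.R_comp_L_sub_P⟩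

theorem exists_isCalkinLimit [CompleteSpace Y] (h : IsFinitelyFredholmEquiv P Q L R)
    (hQ : ∀ m n, (Q m).comp (Q n) = Q (min m n)) {MQ : ℝ} (hMQ : ∀ n, ‖Q n‖ ≤ MQ)
    (hK : compactOperator (RingHom.id ℂ) Y Y ≤ horizApprox Q) {A : X →L[ℂ] X}
    (hA : A ∈ horizApprox P) : ∃ B ∈ horizApprox Q, IsCalkinLimit L R A B := by
  obtain ⟨cL, hL⟩ := h.bddAbove_norm_L
  obtain ⟨cR, hR⟩ := h.bddAbove_norm_R
  replace hL n : ‖L n‖ ≤ cL := hL ⟨n, rfl⟩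
  replace hR n : ‖R n‖ ≤ cR := hR ⟨n, rfl⟩
  have hcL : 0 ≤ cL := (norm_nonneg _).trans (hL 0)
  have hstep {m n : ℕ} (hmn : m ≤ n) :
      dist (Calkin.mk (((L m).comp A).comp (R m))) (Calkin.mk (((L n).comp A).comp (R n)))
        ≤ cL * cR * ‖((P m).comp A).comp (P m) - A‖ := by
    rw [dist_eq_norm]
    refine (norm_mk_sandwich_sub_mk_sandwich_le (h.L_sub_L_comp_P m n hmn)
      (h.R_sub_P_comp_R m n hmn) A).trans ?_
    gcongr
    exacts [hL n, hR n]
  have hcauchy : CauchySeq fun n => Calkin.mk (((L n).comp A).comp (R n)) := by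
    refine cauchySeq_of_le_tendsto_0 (fun N => 2 * (cL * cR * ‖((P N).comp A).comp (P N) - A‖))
      (fun m n N hm hn => ?_)
      (by simpa using ((tendsto_iff_norm_sub_tendsto_zero.1 hA).const_mul (cL * cR)).const_mul 2)
    calc _ ≤ _ := dist_triangle_left _ _ _
      _ ≤ _ := by rw [two_mul]; exact add_le_add (hstep hm) (hstep hn)
  obtain ⟨q, hq⟩ := cauchySeq_tendsto_of_complete hcauchy
  obtain ⟨B, hB, rfl⟩ : q ∈ Calkin.mk '' (horizApprox Q : Set (Y →L[ℂ] Y)) :=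
    (Calkin.isClosed_image_mk hK (isClosed_horizApprox hMQ)).mem_of_tendsto hq
      (Eventually.of_forall fun n => ⟨_, sandwich_mem_horizApprox hQ hK
        (h.L_sub_Q_comp_L n n le_rfl) (h.R_sub_R_comp_Q n n le_rfl) A, rfl⟩)
  exact ⟨B, hB, hq⟩

end IsFinitelyFredholmEquiv

end FredholmEquivalence

/-- If `X` and `Y` have `C`-finitely Fredholm equivalent shrinking Schauder
decompositions, then the quotient Banach algebras `HA(X)/K(X)` and `HA(Y)/K(Y)` are
isomorphic as Banach algebras, via an isomorphism `Φ̂` with `‖Φ̂‖·‖Φ̂⁻¹‖ ≤ C²`.  The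
isomorphism of the quotients is expressed at the level of operators: a map `Φ` sending
horizontally approximable operators on `X` to horizontally approximable operators on `Y`,
which is an algebra homomorphism modulo compact operators, is bijective modulo compact
operators, and distorts the distances to the respective compact operator ideals by constants
`c₁, c₂` with `c₁ * c₂ ≤ C²`. -/
theorem stmt8 (X Y : Type*) [NormedAddCommGroup X] [NormedSpace ℂ X] [CompleteSpace X]
    [NormedAddCommGroup Y] [NormedSpace ℂ Y] [CompleteSpace Y]
    (P : ℕ → X →L[ℂ] X) (Q : ℕ → Y →L[ℂ] Y)
    -- Schauder decompositions
    (hP_proj : ∀ m n, (P m).comp (P n) = P (min m n))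
    (hP_lim : ∀ x : X, Tendsto (fun n => P n x) atTop (𝓝 x))
    (hQ_proj : ∀ m n, (Q m).comp (Q n) = Q (min m n))
    (hQ_lim : ∀ y : Y, Tendsto (fun n => Q n y) atTop (𝓝 y))
    -- shrinking
    (hP_shr : Dense (⋃ n, Set.range fun f : X →L[ℂ] ℂ => f.comp (P n)))
    (hQ_shr : Dense (⋃ n, Set.range fun f : Y →L[ℂ] ℂ => f.comp (Q n)))
    -- C-finite Fredholm equivalence
    (C : ℝ) (hC : 1 ≤ C)
    (L : ℕ → X →L[ℂ] Y) (R : ℕ → Y →L[ℂ] X)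
    (hLbdd : BddAbove (Set.range fun n => ‖L n‖))
    (hRbdd : BddAbove (Set.range fun n => ‖R n‖))
    (hbound : (⨆ n, ‖L n‖) * (⨆ n, ‖R n‖) ≤ C)
    (hcompat : ∀ m n, m ≤ n →
      IsCompactOperator ⇑(L m - (L n).comp (P m)) ∧
      IsCompactOperator ⇑(L m - (Q m).comp (L n)) ∧
      IsCompactOperator ⇑(R m - (R n).comp (Q m)) ∧
      IsCompactOperator ⇑(R m - (P m).comp (R n)))
    (hfred : ∀ n, IsCompactOperator ⇑((R n).comp (L n) - P n) ∧
      IsCompactOperator ⇑((L n).comp (R n) - Q n))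
    -- horizontally approximable operators and distances to the compact ideals
    (HAX : Set (X →L[ℂ] X)) (HAY : Set (Y →L[ℂ] Y))
    (hHAX : HAX = {A | Tendsto (fun n => ((P n).comp A).comp (P n)) atTop (𝓝 A)})
    (hHAY : HAY = {B | Tendsto (fun n => ((Q n).comp B).comp (Q n)) atTop (𝓝 B)})
    (distKX : (X →L[ℂ] X) → ℝ) (distKY : (Y →L[ℂ] Y) → ℝ)
    (hdX : ∀ A, distKX A =
      sInf {r : ℝ | ∃ K : X →L[ℂ] X, IsCompactOperator ⇑K ∧ r = ‖A - K‖})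
    (hdY : ∀ B, distKY B =
      sInf {r : ℝ | ∃ K : Y →L[ℂ] Y, IsCompactOperator ⇑K ∧ r = ‖B - K‖}) :
    ∃ (Φ : (X →L[ℂ] X) → (Y →L[ℂ] Y)) (c₁ c₂ : ℝ),
      0 < c₁ ∧ 0 < c₂ ∧ c₁ * c₂ ≤ C ^ 2 ∧
      (∀ A ∈ HAX, Φ A ∈ HAY) ∧
      (∀ A ∈ HAX, ∀ B ∈ HAX,
        IsCompactOperator ⇑(Φ (A + B) - Φ A - Φ B) ∧
        (∀ c : ℂ, IsCompactOperator ⇑(Φ (c • A) - c • Φ A)) ∧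
        IsCompactOperator ⇑(Φ (A.comp B) - (Φ A).comp (Φ B))) ∧
      (∀ A ∈ HAX, distKY (Φ A) ≤ c₁ * distKX A ∧ distKX A ≤ c₂ * distKY (Φ A)) ∧
      (∀ B ∈ HAY, ∃ A ∈ HAX, IsCompactOperator ⇑(Φ A - B)) := by
  subst hHAX hHAY
  simp only [hdX, hdY, ← Calkin.norm_mk_eq_sInf]
  have h : IsFinitelyFredholmEquiv P Q L R := ⟨hLbdd, hRbdd, fun m n hmn => (hcompat m n hmn).1,
    fun m n hmn => (hcompat m n hmn).2.1, fun m n hmn => (hcompat m n hmn).2.2.1,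
    fun m n hmn => (hcompat m n hmn).2.2.2, fun n => (hfred n).1, fun n => (hfred n).2⟩
  obtain ⟨MP, hMP⟩ := exists_forall_norm_le_of_tendsto hP_lim
  obtain ⟨MQ, hMQ⟩ := exists_forall_norm_le_of_tendsto hQ_lim
  have hKX := compactOperator_le_horizApprox hP_proj hMP hP_lim hP_shr
  have hKY := compactOperator_le_horizApprox hQ_proj hMQ hQ_lim hQ_shr
  have hL (n : ℕ) : ‖L n‖ ≤ ⨆ k, ‖L k‖ := le_ciSup hLbdd n
  have hR (n : ℕ) : ‖R n‖ ≤ ⨆ k, ‖R k‖ := le_ciSup hRbdd n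
  choose! Φ hΦ hΦlim using fun A (hA : A ∈ horizApprox P) =>
    h.exists_isCalkinLimit hQ_proj hMQ hKY hA
  have hC₀ : 0 < C := by linarith
  refine ⟨Φ, C, C, hC₀, hC₀, (sq C).ge, hΦ, fun A hA B hB => ⟨?_, fun c => ?_, ?_⟩,
    fun A hA => ⟨?_, ?_⟩, fun B hB => ?_⟩
  · rw [sub_sub]
    exact Calkin.mk_eq_mk_iff.1 ((hΦlim _ (add_mem hA hB)).mk_eq ((hΦlim A hA).add (hΦlim B hB)))
  · exact Calkin.mk_eq_mk_iff.1
      ((hΦlim _ (Submodule.smul_mem _ c hA)).mk_eq ((hΦlim A hA).smul c))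
  · exact Calkin.mk_eq_mk_iff.1 ((hΦlim _ (comp_mem_horizApprox hP_proj hMP hA hB)).mk_eq
      ((hΦlim A hA).comp hP_proj hMP hL hR h.R_comp_L_sub_P (hΦlim B hB) hB))
  · exact ((hΦlim A hA).norm_mk_le hL hR).trans
      (mul_le_mul_of_nonneg_right hbound (norm_nonneg _))
  · refine ((IsCalkinLimit.of_symm hR hL h.R_comp_L_sub_P hA (hΦlim A hA)).norm_mk_le
      hR hL).trans ?_
    rw [mul_comm (⨆ n, ‖R n‖)]
    exact mul_le_mul_of_nonneg_right hbound (norm_nonneg _)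
  · obtain ⟨A, hA, hlim⟩ := h.symm.exists_isCalkinLimit hP_proj hMP hKX hB
    exact ⟨A, hA, Calkin.mk_eq_mk_iff.1
      ((hΦlim A hA).mk_eq (hlim.of_symm hL hR h.L_comp_R_sub_Q hB))⟩
end

section
/- Let X and Y be Banach spaces with C-finitely Fredholm equivalent Schauder decompositions witnessed by operators (L_n), (R_n), and assume the decomposition of Y is monotone and L_m R_n = Q_{min{m,n}} for all m, n. Then there is a C-equivalent norm on X, namely |||x||| = max{α⁻¹‖x‖_X, sup_n ‖L_n x‖_Y} with α = sup_n ‖R_n‖, under which the decompositions of X and Y are 1-finitely Fredholm equivalent. -/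
open Filter Topology

/-! The new norm dominates `α⁻¹ ‖·‖` and is dominated by `max α⁻¹ (sup ‖L n‖) ‖·‖`, so the two
norms are equivalent with constant `max 1 (α sup ‖L n‖) ≤ C`. Each `L n` has norm at most `1` for
it by construction, and so has each `R n`: the first term is controlled by `‖R n‖ ≤ α`, and the
second because `L m R n = Q (min m n)` is a contraction by monotonicity. -/

section Renorm

variable {𝕜 E F ι : Type*} [NontriviallyNormedField 𝕜]
  [SeminormedAddCommGroup E] [NormedSpace 𝕜 E] [SeminormedAddCommGroup F] [NormedSpace 𝕜 F]
  {L : ι → E →L[𝕜] F}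

theorem norm_apply_le_iSup_opNorm_mul (hL : BddAbove (Set.range fun i => ‖L i‖)) (i : ι) (x : E) :
    ‖L i x‖ ≤ (⨆ j, ‖L j‖) * ‖x‖ :=
  (L i).le_of_opNorm_le (le_ciSup hL i) x

theorem bddAbove_range_norm_apply (hL : BddAbove (Set.range fun i => ‖L i‖)) (x : E) :
    BddAbove (Set.range fun i => ‖L i x‖) :=
  ⟨_, Set.forall_mem_range.2 (norm_apply_le_iSup_opNorm_mul hL · x)⟩

theorem iSup_norm_apply_le (hL : BddAbove (Set.range fun i => ‖L i‖)) (x : E) :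
    ⨆ i, ‖L i x‖ ≤ (⨆ i, ‖L i‖) * ‖x‖ :=
  Real.iSup_le (norm_apply_le_iSup_opNorm_mul hL · x)
    (mul_nonneg (Real.iSup_nonneg fun _ => norm_nonneg _) (norm_nonneg x))

noncomputable def renorm (α : ℝ) (L : ι → E →L[𝕜] F) (x : E) : ℝ :=
  max (α⁻¹ * ‖x‖) (⨆ i, ‖L i x‖)

variable {α : ℝ}

theorem renorm_le_mul_norm (hL : BddAbove (Set.range fun i => ‖L i‖)) (x : E) :
    renorm α L x ≤ max α⁻¹ (⨆ i, ‖L i‖) * ‖x‖ := by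
  rw [renorm, max_mul_of_nonneg _ _ (norm_nonneg x)]
  exact max_le_max le_rfl (iSup_norm_apply_le hL x)

theorem norm_le_mul_renorm (hα : 0 < α) (x : E) : ‖x‖ ≤ α * renorm α L x :=
  calc ‖x‖ = α * (α⁻¹ * ‖x‖) := by field_simp
    _ ≤ α * renorm α L x := mul_le_mul_of_nonneg_left (le_max_left _ _) hα.le

theorem norm_apply_le_renorm (hL : BddAbove (Set.range fun i => ‖L i‖)) (i : ι) (x : E) :
    ‖L i x‖ ≤ renorm α L x :=
  le_max_of_le_right (le_ciSup (bddAbove_range_norm_apply hL x) i)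

theorem renorm_le (hα : 0 < α) {x : E} {c : ℝ} (hx : ‖x‖ ≤ α * c) (hLx : ∀ i, ‖L i x‖ ≤ c) :
    renorm α L x ≤ c := by
  have hc : 0 ≤ c := nonneg_of_mul_nonneg_right ((norm_nonneg x).trans hx) hα
  refine max_le ?_ (Real.iSup_le hLx hc)
  calc α⁻¹ * ‖x‖ ≤ α⁻¹ * (α * c) := mul_le_mul_of_nonneg_left hx (inv_nonneg.2 hα.le)
    _ = c := by field_simp

end Renorm

theorem stmt9_general (X Y : Type*) [NormedAddCommGroup X] [NormedSpace ℂ X]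
    [NormedAddCommGroup Y] [NormedSpace ℂ Y]
    (Q : ℕ → Y →L[ℂ] Y)
    (C : ℝ) (hC : 1 ≤ C)
    (L : ℕ → X →L[ℂ] Y) (R : ℕ → Y →L[ℂ] X)
    (hLbdd : BddAbove (Set.range fun n => ‖L n‖))
    (hRbdd : BddAbove (Set.range fun n => ‖R n‖))
    (hbound : (⨆ n, ‖L n‖) * (⨆ n, ‖R n‖) ≤ C)
    -- the decomposition of Y is monotone
    (hmono : ∀ n, ‖Q n‖ ≤ 1)
    -- L_m R_n = Q_{min{m,n}}
    (hLR : ∀ m n, (L m).comp (R n) = Q (min m n))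
    (α : ℝ) (hα : α = ⨆ n, ‖R n‖) (hαpos : 0 < α)
    (N : X → ℝ) (hN : ∀ x, N x = max (α⁻¹ * ‖x‖) (⨆ n, ‖L n x‖)) :
    ∃ c₁ c₂ : ℝ, 0 < c₁ ∧ 0 < c₂ ∧ c₁ * c₂ ≤ C ∧
      (∀ x, N x ≤ c₁ * ‖x‖) ∧ (∀ x, ‖x‖ ≤ c₂ * N x) ∧
      (∀ n x, ‖L n x‖ ≤ N x) ∧ (∀ n y, N (R n y) ≤ ‖y‖) := by
  obtain rfl : N = renorm α L := funext hN
  refine ⟨max α⁻¹ (⨆ n, ‖L n‖), α, lt_max_of_lt_left (inv_pos.2 hαpos), hαpos, ?_,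
    renorm_le_mul_norm hLbdd, norm_le_mul_renorm hαpos, norm_apply_le_renorm hLbdd,
    fun n y => renorm_le hαpos ?_ fun m => ?_⟩
  · rw [max_mul_of_nonneg _ _ hαpos.le, inv_mul_cancel₀ hαpos.ne']
    exact max_le hC (hα ▸ hbound)
  · exact (R n).le_of_opNorm_le (hα ▸ le_ciSup hRbdd n) y
  · rw [← ContinuousLinearMap.comp_apply, hLR, ← one_mul ‖y‖]
    exact (Q _).le_of_opNorm_le (hmono _) y

/-- If the Schauder decompositions of `X` and `Y` are `C`-finitely Fredholm
equivalent via `(L n)`, `(R n)`, the decomposition of `Y` is monotone, and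
`L m ∘ R n = Q (min m n)` for all `m, n`, then the norm
`|||x||| = max {α⁻¹ ‖x‖, sup_n ‖L n x‖}` (with `α = sup_n ‖R n‖`) is `C`-equivalent to the
norm of `X` and under it the two decompositions are `1`-finitely Fredholm equivalent
(i.e. all `L n` and `R n` have norm at most `1`). -/
theorem stmt9 (X Y : Type*) [NormedAddCommGroup X] [NormedSpace ℂ X] [CompleteSpace X]
    [NormedAddCommGroup Y] [NormedSpace ℂ Y] [CompleteSpace Y]
    (P : ℕ → X →L[ℂ] X) (Q : ℕ → Y →L[ℂ] Y)
    (hP_proj : ∀ m n, (P m).comp (P n) = P (min m n))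
    (hP_lim : ∀ x : X, Tendsto (fun n => P n x) atTop (𝓝 x))
    (hQ_proj : ∀ m n, (Q m).comp (Q n) = Q (min m n))
    (hQ_lim : ∀ y : Y, Tendsto (fun n => Q n y) atTop (𝓝 y))
    (C : ℝ) (hC : 1 ≤ C)
    (L : ℕ → X →L[ℂ] Y) (R : ℕ → Y →L[ℂ] X)
    (hLbdd : BddAbove (Set.range fun n => ‖L n‖))
    (hRbdd : BddAbove (Set.range fun n => ‖R n‖))
    (hbound : (⨆ n, ‖L n‖) * (⨆ n, ‖R n‖) ≤ C)
    (hcompat : ∀ m n, m ≤ n →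
      IsCompactOperator ⇑(L m - (L n).comp (P m)) ∧
      IsCompactOperator ⇑(L m - (Q m).comp (L n)) ∧
      IsCompactOperator ⇑(R m - (R n).comp (Q m)) ∧
      IsCompactOperator ⇑(R m - (P m).comp (R n)))
    (hfred : ∀ n, IsCompactOperator ⇑((R n).comp (L n) - P n) ∧
      IsCompactOperator ⇑((L n).comp (R n) - Q n))
    -- the decomposition of Y is monotone
    (hmono : ∀ n, ‖Q n‖ ≤ 1)
    -- L_m R_n = Q_{min{m,n}}
    (hLR : ∀ m n, (L m).comp (R n) = Q (min m n))
    (α : ℝ) (hα : α = ⨆ n, ‖R n‖) (hαpos : 0 < α)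
    (N : X → ℝ) (hN : ∀ x, N x = max (α⁻¹ * ‖x‖) (⨆ n, ‖L n x‖)) :
    ∃ c₁ c₂ : ℝ, 0 < c₁ ∧ 0 < c₂ ∧ c₁ * c₂ ≤ C ∧
      (∀ x, N x ≤ c₁ * ‖x‖) ∧ (∀ x, ‖x‖ ≤ c₂ * N x) ∧
      (∀ n x, ‖L n x‖ ≤ N x) ∧ (∀ n y, N (R n y) ≤ ‖y‖) :=
  stmt9_general X Y Q C hC L R hLbdd hRbdd hbound hmono hLR α hα hαpos N hN
end

section
/- Let Z be a C-Bourgain-Delbaen-ℒ∞ sum of a sequence of Banach spaces (X_n) with extension operators (i_n) and restriction maps (r_n). Then the maps P_n = i_n r_n restricted to Z define bounded projections on Z with ‖P_n‖ ≤ C and P_m P_n = P_{min{m,n}} for all m, n, and the subspaces Z_n = i_n((X_n ⊕ ℓ∞(Δ_n))_∞) form a Schauder decomposition of Z with associated projections (P_n). -/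
open Filter Topology ENNReal

/-! On the dense subspace `span (⋃ n, Z_n)` the operators `P_n = i_n r_n` are eventually the
identity: by (γ) an element of `Z_k` is fixed by `P_n` once `k ≤ n`, and it is killed by `P_n`
for `n < k` because its restriction to the first `n` coordinates vanishes. Since `‖P_n‖ ≤ C`,
the family `(P_n)` is equicontinuous, so both the invariance of the span and the convergence
`P_n z → z` pass to its closure `Z`. The composition rule `P_m P_n = P_{min m n}` follows from
(β) and (γ), and `P_{n+1} - P_n = P_{n+1} (id - P_n)` has the form `i_{n+1} w` with `w`
supported on the `(n+1)`-st coordinate because `P_n` does not change the first `n`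
coordinates. -/

section EventuallyFixed

variable {ι 𝕜 E : Type*} {l : Filter ι}

theorem Submodule.eventually_apply_eq_of_mem_span [Semiring 𝕜] [AddCommMonoid E] [Module 𝕜 E]
    {T : ι → E →ₗ[𝕜] E} {s : Set E} (hs : ∀ x ∈ s, ∀ᶠ i in l, T i x = x) {y : E}
    (hy : y ∈ Submodule.span 𝕜 s) : ∀ᶠ i in l, T i y = y := by
  induction hy using Submodule.span_induction with
  | mem x hx => exact hs x hx
  | zero => exact .of_forall fun i => map_zero (T i)
  | add x y _ _ hx hy =>
    filter_upwards [hx, hy] with i hxi hyi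
    rw [map_add, hxi, hyi]
  | smul a x _ hx =>
    filter_upwards [hx] with i hxi
    rw [map_smul, hxi]

theorem ContinuousLinearMap.tendsto_apply_of_mem_topologicalClosure_span
    [NontriviallyNormedField 𝕜] [SeminormedAddCommGroup E] [NormedSpace 𝕜 E]
    {T : ι → E →L[𝕜] E} {C : ℝ} (hT : ∀ i x, ‖T i x‖ ≤ C * ‖x‖) {s : Set E}
    (hs : ∀ x ∈ s, ∀ᶠ i in l, T i x = x) {x : E}
    (hx : x ∈ (Submodule.span 𝕜 s).topologicalClosure) : Tendsto (T · x) l (𝓝 x) := by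
  have hbound : ∃ C, ∀ i x, ‖T i x‖ ≤ C * ‖x‖ := ⟨C, hT⟩
  have hequi : Equicontinuous ((↑) ∘ T : ι → E → E) :=
    ((NormedSpace.equicontinuous_TFAE T).out 3 1).mp hbound
  have hclosed : IsClosed {x | Tendsto (T · x) l (𝓝 x)} :=
    hequi.isClosed_setOfPred_tendsto continuous_id
  refine closure_minimal (fun y hy => ?_) hclosed hx
  have hfix := Submodule.eventually_apply_eq_of_mem_span (T := fun i => (T i : E →ₗ[𝕜] E)) hs hy
  exact tendsto_const_nhds.congr' (hfix.mono fun _ h => h.symm)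

end EventuallyFixed

namespace BourgainDelbaen

variable {𝕜 : Type*} [NontriviallyNormedField 𝕜] {E : ℕ → Type*}
  [∀ n, NormedAddCommGroup (E n)] [∀ n, NormedSpace 𝕜 (E n)] {ρ i : ℕ → lp E ∞ →L[𝕜] lp E ∞}

def IsRestriction (ρ : ℕ → lp E ∞ →L[𝕜] lp E ∞) : Prop :=
  ∀ n w k, ρ n w k = if k ≤ n then w k else 0

namespace IsRestriction

theorem norm_apply_le (hρ : IsRestriction ρ) (n : ℕ) (w : lp E ∞) : ‖ρ n w‖ ≤ ‖w‖ := by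
  refine lp.norm_le_of_forall_le (norm_nonneg w) fun k => ?_
  rw [hρ]
  split_ifs
  · exact lp.norm_apply_le_norm ENNReal.top_ne_zero w k
  · simp

theorem apply_apply_of_le (hρ : IsRestriction ρ) {m n : ℕ} (hmn : m ≤ n) (w : lp E ∞) :
    ρ m (ρ n w) = ρ m w := by
  ext k : 2
  rw [hρ, hρ, hρ]
  split_ifs <;> first | rfl | omega

theorem apply_eq_zero_of_lt (hρ : IsRestriction ρ) {n k : ℕ} (hnk : n < k) {w : lp E ∞}
    (hw : ∀ j, j ≠ k → w j = 0) : ρ n w = 0 := by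
  ext j : 2
  rw [hρ]
  split_ifs with hj
  · exact hw j (by omega)
  · rfl

theorem zero_apply_apply_of_ne_zero (hρ : IsRestriction ρ) (w : lp E ∞) :
    ∀ k, k ≠ 0 → ρ 0 w k = 0 := by
  intro k hk
  rw [hρ, if_neg (by omega)]

theorem succ_sub_apply_eq_zero (hρ : IsRestriction ρ) {n : ℕ} {v w : lp E ∞}
    (h : ρ n v = ρ n w) : ∀ k, k ≠ n + 1 → (ρ (n + 1) v - ρ (n + 1) w) k = 0 := by
  intro k hk
  have hcoord : ρ n v k = ρ n w k := by rw [h]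
  rw [hρ, hρ] at hcoord
  rw [lp.coeFn_sub, Pi.sub_apply, hρ, hρ]
  split_ifs at hcoord ⊢ <;> first | simp [hcoord] | omega

end IsRestriction

/-- Conditions (β) and (γ), with `W_n` realised inside `W` as the range of `ρ n`. -/
structure IsExtensionSystem (i ρ : ℕ → lp E ∞ →L[𝕜] lp E ∞) : Prop where
  restrict : IsRestriction ρ
  restrict_extend : ∀ n w, ρ n (i n w) = ρ n w
  extend_restrict_extend : ∀ m n, m ≤ n → (i n).comp ((ρ n).comp (i m)) = i m

/-- The summand `Z_n = i_n((X_n ⊕ ℓ∞(Δ_n))_∞)`. -/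
def summand (i : ℕ → lp E ∞ →L[𝕜] lp E ∞) (n : ℕ) : Set (lp E ∞) :=
  i n '' {w | ∀ k, k ≠ n → w k = 0}

noncomputable def proj (i ρ : ℕ → lp E ∞ →L[𝕜] lp E ∞) (n : ℕ) : lp E ∞ →L[𝕜] lp E ∞ :=
  (i n).comp (ρ n)

theorem IsRestriction.norm_proj_apply_le (hρ : IsRestriction ρ) {C : ℝ} {n : ℕ}
    (hi : ‖i n‖ ≤ C) (z : lp E ∞) : ‖proj i ρ n z‖ ≤ C * ‖z‖ :=
  calc ‖i n (ρ n z)‖ ≤ C * ‖ρ n z‖ := (i n).le_of_opNorm_le hi _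
    _ ≤ C * ‖z‖ := by
      gcongr
      exacts [(norm_nonneg _).trans hi, hρ.norm_apply_le n z]

theorem IsRestriction.proj_zero_mem_summand (hρ : IsRestriction ρ) (z : lp E ∞) :
    proj i ρ 0 z ∈ summand i 0 :=
  ⟨ρ 0 z, hρ.zero_apply_apply_of_ne_zero z, rfl⟩

namespace IsExtensionSystem

theorem restrict_extend_of_le (h : IsExtensionSystem i ρ) {m n : ℕ} (hmn : m ≤ n)
    (w : lp E ∞) : ρ m (i n w) = ρ m w := by
  rw [← h.restrict.apply_apply_of_le hmn, h.restrict_extend,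
    h.restrict.apply_apply_of_le hmn]

theorem proj_proj (h : IsExtensionSystem i ρ) (m n : ℕ) (z : lp E ∞) :
    proj i ρ m (proj i ρ n z) = proj i ρ (min m n) z := by
  rcases le_total m n with hmn | hnm
  · simp only [proj, ContinuousLinearMap.comp_apply, min_eq_left hmn,
      h.restrict_extend_of_le hmn, h.restrict.apply_apply_of_le hmn]
  · rw [min_eq_right hnm]
    exact DFunLike.congr_fun (h.extend_restrict_extend n m hnm) (ρ n z)

theorem proj_apply_of_mem_summand (h : IsExtensionSystem i ρ) {k n : ℕ} {x : lp E ∞}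
    (hx : x ∈ summand i k) : proj i ρ n x = if k ≤ n then x else 0 := by
  obtain ⟨w, hw, rfl⟩ := hx
  split_ifs with hkn
  · exact DFunLike.congr_fun (h.extend_restrict_extend k n hkn) w
  · rw [proj, ContinuousLinearMap.comp_apply, h.restrict_extend_of_le (by omega),
      h.restrict.apply_eq_zero_of_lt (by omega) hw, map_zero]

theorem eventually_proj_apply_eq_of_mem_summand (h : IsExtensionSystem i ρ) {k : ℕ}
    {x : lp E ∞} (hx : x ∈ summand i k) : ∀ᶠ n in atTop, proj i ρ n x = x := by
  filter_upwards [eventually_ge_atTop k] with n hkn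
  rw [h.proj_apply_of_mem_summand hx, if_pos hkn]

theorem span_summand_mem_invtSubmodule (h : IsExtensionSystem i ρ) (n : ℕ) :
    Submodule.span 𝕜 (⋃ k, summand i k) ∈
      Module.End.invtSubmodule (proj i ρ n : lp E ∞ →ₗ[𝕜] lp E ∞) := by
  rw [Module.End.mem_invtSubmodule_iff_map_le, Submodule.map_span_le]
  intro x hx
  obtain ⟨k, hxk⟩ := Set.mem_iUnion.mp hx
  rw [ContinuousLinearMap.coe_coe, h.proj_apply_of_mem_summand hxk]
  split_ifs
  · exact Submodule.subset_span hx
  · exact Submodule.zero_mem _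

theorem proj_succ_sub_proj_mem_summand (h : IsExtensionSystem i ρ) (n : ℕ) (z : lp E ∞) :
    proj i ρ (n + 1) z - proj i ρ n z ∈ summand i (n + 1) := by
  have hfix : ρ n (proj i ρ n z) = ρ n z := by
    rw [proj, ContinuousLinearMap.comp_apply, h.restrict_extend,
      h.restrict.apply_apply_of_le le_rfl]
  refine ⟨ρ (n + 1) z - ρ (n + 1) (proj i ρ n z),
    h.restrict.succ_sub_apply_eq_zero hfix.symm, ?_⟩
  rw [map_sub]
  change proj i ρ (n + 1) z - proj i ρ (n + 1) (proj i ρ n z) = _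
  rw [h.proj_proj, min_eq_right n.le_succ]

end IsExtensionSystem

end BourgainDelbaen

open BourgainDelbaen in
theorem stmt10_general (X : ℕ → Type*) [∀ n, NormedAddCommGroup (X n)] [∀ n, NormedSpace ℂ (X n)]
    (Δ : ℕ → Type*) [∀ n, Fintype (Δ n)]
    (C : ℝ)
    (ρ : ℕ → lp (fun n => X n × (Δ n → ℂ)) ∞ →L[ℂ] lp (fun n => X n × (Δ n → ℂ)) ∞)
    (hρ : ∀ n (w : lp (fun n => X n × (Δ n → ℂ)) ∞) k,
      (ρ n w) k = if k ≤ n then w k else 0)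
    (i : ℕ → lp (fun n => X n × (Δ n → ℂ)) ∞ →L[ℂ] lp (fun n => X n × (Δ n → ℂ)) ∞)
    (hiC : ∀ n, ‖i n‖ ≤ C)
    (hright : ∀ n w, ρ n (i n w) = ρ n w)
    (hγ : ∀ m n, m ≤ n → (i n).comp ((ρ n).comp (i m)) = i m)
    (Zn : ℕ → Set (lp (fun n => X n × (Δ n → ℂ)) ∞))
    (hZn : ∀ n, Zn n = i n '' {w | ∀ k, k ≠ n → w k = 0})
    (Z : Set (lp (fun n => X n × (Δ n → ℂ)) ∞))
    (hZ : Z = ((Submodule.span ℂ (⋃ n, Zn n)).topologicalClosure :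
      Submodule ℂ (lp (fun n => X n × (Δ n → ℂ)) ∞))) :
    (∀ n, ∀ z ∈ Z, i n (ρ n z) ∈ Z) ∧
    (∀ n z, ‖i n (ρ n z)‖ ≤ C * ‖z‖) ∧
    (∀ m n, ∀ z ∈ Z, i m (ρ m (i n (ρ n z))) = i (min m n) (ρ (min m n) z)) ∧
    (∀ z ∈ Z, Tendsto (fun n => i n (ρ n z)) atTop (𝓝 z)) ∧
    (∀ z ∈ Z, i 0 (ρ 0 z) ∈ Zn 0) ∧
    (∀ z ∈ Z, ∀ n, i (n + 1) (ρ (n + 1) z) - i n (ρ n z) ∈ Zn (n + 1)) := by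
  have h : IsExtensionSystem i ρ := ⟨hρ, hright, hγ⟩
  obtain rfl : Zn = summand i := funext hZn
  subst hZ
  have hnorm (n : ℕ) := h.restrict.norm_proj_apply_le (hiC n)
  refine ⟨fun n z hz => ?_, hnorm, fun m n z _ => h.proj_proj m n z, fun z hz => ?_,
    fun z _ => h.restrict.proj_zero_mem_summand z,
    fun z _ n => h.proj_succ_sub_proj_mem_summand n z⟩
  · exact Submodule.topologicalClosure_mem_invtSubmodule (h.span_summand_mem_invtSubmodule n) hz
  · refine ContinuousLinearMap.tendsto_apply_of_mem_topologicalClosure_span hnorm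
      (fun x hx => ?_) hz
    obtain ⟨k, hxk⟩ := Set.mem_iUnion.mp hx
    exact h.eventually_proj_apply_eq_of_mem_summand hxk

/-- For a `C`-Bourgain-Delbaen-`ℒ∞` sum `Z` of Banach spaces `(X n)` inside
`W = (⊕_n (X_n ⊕ ℓ∞(Δ_n))_∞)_∞`, with extension operators `i n` (defined on `W_n`, encoded
via the restriction projections `ρ n`), the maps `P n = i n ∘ ρ n` restricted to `Z` are
bounded projections with `‖P n z‖ ≤ C ‖z‖`, `P m P n = P (min m n)` on `Z`, they converge
pointwise to the identity on `Z`, and the differences of successive projections take values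
in the summands `Z_n = i n ((X_n ⊕ ℓ∞(Δ_n))_∞)`; i.e. `(Z_n)` is a Schauder decomposition
of `Z` with associated projections `(P n)`. -/
theorem stmt10 (X : ℕ → Type*) [∀ n, NormedAddCommGroup (X n)] [∀ n, NormedSpace ℂ (X n)]
    [∀ n, CompleteSpace (X n)]
    (Δ : ℕ → Type*) [∀ n, Fintype (Δ n)]
    (C : ℝ) (hC : 1 ≤ C)
    (ρ : ℕ → lp (fun n => X n × (Δ n → ℂ)) ∞ →L[ℂ] lp (fun n => X n × (Δ n → ℂ)) ∞)
    (hρ : ∀ n (w : lp (fun n => X n × (Δ n → ℂ)) ∞) k,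
      (ρ n w) k = if k ≤ n then w k else 0)
    (i : ℕ → lp (fun n => X n × (Δ n → ℂ)) ∞ →L[ℂ] lp (fun n => X n × (Δ n → ℂ)) ∞)
    (hiC : ∀ n, ‖i n‖ ≤ C)
    (hloc : ∀ n, (i n).comp (ρ n) = i n)
    (hright : ∀ n w, ρ n (i n w) = ρ n w)
    (hγ : ∀ m n, m ≤ n → (i n).comp ((ρ n).comp (i m)) = i m)
    (hδ : ∀ m n, m < n → ∀ w, ((i m w) n).1 = 0)
    (Zn : ℕ → Set (lp (fun n => X n × (Δ n → ℂ)) ∞))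
    (hZn : ∀ n, Zn n = i n '' {w | ∀ k, k ≠ n → w k = 0})
    (Z : Set (lp (fun n => X n × (Δ n → ℂ)) ∞))
    (hZ : Z = ((Submodule.span ℂ (⋃ n, Zn n)).topologicalClosure :
      Submodule ℂ (lp (fun n => X n × (Δ n → ℂ)) ∞))) :
    (∀ n, ∀ z ∈ Z, i n (ρ n z) ∈ Z) ∧
    (∀ n z, ‖i n (ρ n z)‖ ≤ C * ‖z‖) ∧
    (∀ m n, ∀ z ∈ Z, i m (ρ m (i n (ρ n z))) = i (min m n) (ρ (min m n) z)) ∧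
    (∀ z ∈ Z, Tendsto (fun n => i n (ρ n z)) atTop (𝓝 z)) ∧
    (∀ z ∈ Z, i 0 (ρ 0 z) ∈ Zn 0) ∧
    (∀ z ∈ Z, ∀ n, i (n + 1) (ρ (n + 1) z) - i n (ρ n z) ∈ Zn (n + 1)) :=
  stmt10_general X Δ C ρ hρ i hiC hright hγ Zn hZn Z hZ
end

section
/- Let Z be a C-Bourgain-Delbaen-ℒ∞ sum of Banach spaces (X_n), with projections P_n = i_n r_n|_Z on Z and projections Q_n on Y = (⊕_n X_n)₀, and let L_n, R_n be the standard finite-Fredholm-equivalence operators. Then for every n, the operator P_n − L_n R_n : Z → Z is of finite rank, since it factors through the finite-dimensional space ℓ∞(Δ_1) ⊕ ⋯ ⊕ ℓ∞(Δ_n); moreover R_n L_n = Q_n exactly. -/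
/-!
Since `ρ n ∘ i n = ρ n`, the operator `i n` does not change the coordinates `k ≤ n`, so
`L n (R n y)` recovers the first `n + 1` coordinates of `y`. For `z ∈ Z`,
`P n z - R n (L n z) = i n v`, where `v` keeps the `ℓ∞(Δ k)`-components of `z` for `k ≤ n` and
vanishes elsewhere; hence `P n - R n ∘ L n` factors through `ℓ∞(Δ 0) ⊕ ⋯ ⊕ ℓ∞(Δ n)`.
-/

open ENNReal

theorem LinearMap.finiteDimensional_range_of_forall_apply_mem {K M N N' : Type*} [Field K]
    [AddCommGroup M] [Module K M] [AddCommGroup N] [Module K N] [AddCommGroup N'] [Module K N']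
    {f : M →ₗ[K] N} {u : N →ₗ[K] N'} (hu : Function.Injective u) {V : Submodule K N'}
    [FiniteDimensional K V] (h : ∀ x, u (f x) ∈ V) : FiniteDimensional K (range f) :=
  FiniteDimensional.of_injective
    (u.restrict (p := range f) (q := V) (by rintro _ ⟨x, rfl⟩; exact h x)) fun _ _ h => Subtype.ext (hu (congrArg Subtype.val h))

namespace lp

variable {E F : ℕ → Type*} [∀ k, NormedAddCommGroup (E k)] [∀ k, NormedAddCommGroup (F k)]

def truncateInl (n : ℕ) (y : lp E ∞) : lp (fun k => E k × F k) ∞ :=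
  ⟨fun k => (if k ≤ n then y k else 0, 0),
    (lp.memℓp y).mono' fun k => by split_ifs <;> simp⟩

theorem truncateInl_apply (n : ℕ) (y : lp E ∞) (k : ℕ) :
    (truncateInl n y : lp (fun k => E k × F k) ∞) k = (if k ≤ n then y k else 0, 0) := rfl

variable {𝕜 : Type*} [NormedField 𝕜] [∀ k, NormedSpace 𝕜 (E k)] [∀ k, NormedSpace 𝕜 (F k)]

def inrFin (n : ℕ) : (∀ k : Fin (n + 1), F k) →ₗ[𝕜] lp (fun k => E k × F k) ∞ where
  toFun g := ⟨fun k => (0, if h : k < n + 1 then g ⟨k, h⟩ else 0),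
    memℓp_infty ⟨‖g‖, by
      rintro _ ⟨k, rfl⟩
      dsimp only
      split_ifs with h
      · simpa using norm_le_pi_norm g ⟨k, h⟩
      · simp⟩⟩
  map_add' g g' := lp.ext <| funext fun k => by
    simp only [lp.coeFn_add, Pi.add_apply, Prod.mk_add_mk, add_zero]
    split_ifs <;> simp
  map_smul' c g := lp.ext <| funext fun k => by
    simp only [lp.coeFn_smul, Pi.smul_apply, Prod.smul_mk, smul_zero, RingHom.id_apply]
    split_ifs <;> simp

theorem inrFin_apply (n : ℕ) (g : ∀ k : Fin (n + 1), F k) (k : ℕ) :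
    (inrFin (E := E) (𝕜 := 𝕜) n g) k = (0, if h : k < n + 1 then g ⟨k, h⟩ else 0) := rfl

end lp

theorem stmt13_general (X : ℕ → Type*) [∀ n, NormedAddCommGroup (X n)] [∀ n, NormedSpace ℂ (X n)]
    (Δ : ℕ → Type*) [∀ n, Fintype (Δ n)]
    (ρ : ℕ → lp (fun n => X n × (Δ n → ℂ)) ∞ →L[ℂ] lp (fun n => X n × (Δ n → ℂ)) ∞)
    (hρ : ∀ n (w : lp (fun n => X n × (Δ n → ℂ)) ∞) k,
      (ρ n w) k = if k ≤ n then w k else 0)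
    (i : ℕ → lp (fun n => X n × (Δ n → ℂ)) ∞ →L[ℂ] lp (fun n => X n × (Δ n → ℂ)) ∞)
    (hright : ∀ n w, ρ n (i n w) = ρ n w)
    -- `Z`, as a closed subspace of `W`
    (Z : Submodule ℂ (lp (fun n => X n × (Δ n → ℂ)) ∞))
    -- `Y = (⊕_n X_n)₀`, the c₀-sum, as the closed subspace of `(⊕_n X_n)_∞` generated by
    -- the finitely supported elements
    (Y : Submodule ℂ (lp (fun n => X n) ∞))
    -- the projections of the two Schauder decompositions
    (P : ℕ → Z →L[ℂ] Z) (Q : ℕ → Y →L[ℂ] Y)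
    (hP : ∀ n (z : Z), ((P n z : lp (fun n => X n × (Δ n → ℂ)) ∞)) = i n (ρ n (z : lp (fun n => X n × (Δ n → ℂ)) ∞)))
    (hQ : ∀ n (y : Y) k, ((Q n y : lp (fun n => X n) ∞)) k = if k ≤ n then (y : lp (fun n => X n) ∞) k else 0)
    -- the operators L_n and R_n
    (L : ℕ → Z →L[ℂ] Y) (R : ℕ → Y →L[ℂ] Z)
    (hL : ∀ n (z : Z) k, ((L n z : lp (fun n => X n) ∞)) k =
      if k ≤ n then ((z : lp (fun n => X n × (Δ n → ℂ)) ∞) k).1 else 0)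
    (hR : ∀ n (y : Y) (w : lp (fun n => X n × (Δ n → ℂ)) ∞),
      (∀ k, w k = ((if k ≤ n then (y : lp (fun n => X n) ∞) k else 0), 0)) →
      ((R n y : lp (fun n => X n × (Δ n → ℂ)) ∞)) = i n w) :
    ∀ n, (L n).comp (R n) = Q n ∧
      FiniteDimensional ℂ
        (LinearMap.range ((P n - (R n).comp (L n) : Z →L[ℂ] Z) : Z →ₗ[ℂ] Z)) := by
  intro n
  have hi_eq : ∀ w k, k ≤ n → i n w k = w k := fun w k hk => by
    simpa only [hρ, if_pos hk] using congrArg (· k) (hright n w)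
  have hR_trunc : ∀ y, (R n y : lp (fun n => X n × (Δ n → ℂ)) ∞) = i n (lp.truncateInl n y) :=
    fun y => hR n y _ fun k => rfl
  refine ⟨ContinuousLinearMap.ext fun y => Subtype.ext <| lp.ext <| funext fun k => ?_, ?_⟩
  · rw [ContinuousLinearMap.comp_apply, hL, hR_trunc, hQ]
    split_ifs with hk
    · rw [hi_eq _ _ hk, lp.truncateInl_apply, if_pos hk]
    · rfl
  · refine LinearMap.finiteDimensional_range_of_forall_apply_mem Z.injective_subtype
      (V := LinearMap.range ((i n).toLinearMap ∘ₗ lp.inrFin n)) fun z =>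
      ⟨fun k => ((z : lp (fun n => X n × (Δ n → ℂ)) ∞) k).2, ?_⟩
    change i n _ = ((P n z - R n (L n z) : Z) : lp (fun n => X n × (Δ n → ℂ)) ∞)
    rw [Submodule.coe_sub, hP, hR_trunc, ← map_sub]
    congr 1
    refine lp.ext <| funext fun k => ?_
    rw [lp.inrFin_apply, lp.coeFn_sub, Pi.sub_apply, hρ, lp.truncateInl_apply, hL]
    by_cases hk : k ≤ n
    · simp [hk, Nat.lt_succ_of_le hk, Prod.ext_iff]
    · simp [hk, show ¬ k < n + 1 by omega]

/-- Let `Z` be a `C`-Bourgain-Delbaen-`ℒ∞` sum of Banach spaces `(X n)`, with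
projections `P n = i n ∘ ρ n |_Z` on `Z` and coordinate projections `Q n` on
`Y = (⊕_n X_n)₀`, and let `L n`, `R n` be the standard finite-Fredholm-equivalence
operators.  Then for every `n` the operator `P n − R n ∘ L n : Z → Z` is of finite rank
(it factors through the finite-dimensional space `ℓ∞(Δ_1) ⊕ ⋯ ⊕ ℓ∞(Δ_n)`); moreover
`L n ∘ R n = Q n` exactly. -/
theorem stmt13 (X : ℕ → Type*) [∀ n, NormedAddCommGroup (X n)] [∀ n, NormedSpace ℂ (X n)]
    [∀ n, CompleteSpace (X n)]
    (Δ : ℕ → Type*) [∀ n, Fintype (Δ n)]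
    (C : ℝ) (hC : 1 ≤ C)
    (ρ : ℕ → lp (fun n => X n × (Δ n → ℂ)) ∞ →L[ℂ] lp (fun n => X n × (Δ n → ℂ)) ∞)
    (hρ : ∀ n (w : lp (fun n => X n × (Δ n → ℂ)) ∞) k,
      (ρ n w) k = if k ≤ n then w k else 0)
    (i : ℕ → lp (fun n => X n × (Δ n → ℂ)) ∞ →L[ℂ] lp (fun n => X n × (Δ n → ℂ)) ∞)
    (hiC : ∀ n, ‖i n‖ ≤ C)
    (hloc : ∀ n, (i n).comp (ρ n) = i n)
    (hright : ∀ n w, ρ n (i n w) = ρ n w)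
    (hγ : ∀ m n, m ≤ n → (i n).comp ((ρ n).comp (i m)) = i m)
    (hδ : ∀ m n, m < n → ∀ w, ((i m w) n).1 = 0)
    -- `Z`, as a closed subspace of `W`
    (Z : Submodule ℂ (lp (fun n => X n × (Δ n → ℂ)) ∞))
    (hZ : Z = (Submodule.span ℂ
        (⋃ n, i n '' {w | ∀ k, k ≠ n → w k = 0})).topologicalClosure)
    -- `Y = (⊕_n X_n)₀`, the c₀-sum, as the closed subspace of `(⊕_n X_n)_∞` generated by
    -- the finitely supported elements
    (Y : Submodule ℂ (lp (fun n => X n) ∞))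
    (hY : Y = (Submodule.span ℂ
        {f : lp (fun n => X n) ∞ | {n | f n ≠ 0}.Finite}).topologicalClosure)
    -- the projections of the two Schauder decompositions
    (P : ℕ → Z →L[ℂ] Z) (Q : ℕ → Y →L[ℂ] Y)
    (hP : ∀ n (z : Z), ((P n z : lp (fun n => X n × (Δ n → ℂ)) ∞)) = i n (ρ n (z : lp (fun n => X n × (Δ n → ℂ)) ∞)))
    (hQ : ∀ n (y : Y) k, ((Q n y : lp (fun n => X n) ∞)) k = if k ≤ n then (y : lp (fun n => X n) ∞) k else 0)
    -- the operators L_n and R_n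
    (L : ℕ → Z →L[ℂ] Y) (R : ℕ → Y →L[ℂ] Z)
    (hL : ∀ n (z : Z) k, ((L n z : lp (fun n => X n) ∞)) k =
      if k ≤ n then ((z : lp (fun n => X n × (Δ n → ℂ)) ∞) k).1 else 0)
    (hR : ∀ n (y : Y) (w : lp (fun n => X n × (Δ n → ℂ)) ∞),
      (∀ k, w k = ((if k ≤ n then (y : lp (fun n => X n) ∞) k else 0), 0)) →
      ((R n y : lp (fun n => X n × (Δ n → ℂ)) ∞)) = i n w) :
    ∀ n, (L n).comp (R n) = Q n ∧
      FiniteDimensional ℂ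
        (LinearMap.range ((P n - (R n).comp (L n) : Z →L[ℂ] Z) : Z →ₗ[ℂ] Z)) :=
  stmt13_general X Δ ρ hρ i hright Z Y P Q hP hQ L R hL hR
end

section
/- Let X be a Banach space with a Schauder decomposition and associated projections (P_n), let Y be a Banach space, and let T : X → Y be a bounded linear operator. Then the following are equivalent: (i) for every bounded horizontally block sequence (x_k) in X, lim_k ‖T x_k‖ = 0; (ii) T = lim_n T P_n in operator norm. -/
/-!
If `T Pₙ → T`, a block vector `x` supported on `(a, b]` satisfies `Pₐ x = 0`, so
`‖T x‖ = ‖(T Pₐ - T) x‖ ≤ ‖T Pₐ - T‖ ‖x‖`, which tends to zero along successive blocks.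

Conversely, by Banach–Steinhaus the projections are uniformly bounded, say by `C`. If
`‖T Pₙ - T‖ > ε` for infinitely many `n`, a near-norming vector for `T Pₙ - T` yields a
tail `y = Pₙ x - x` with `‖T y‖ > ε`; truncating it to `Pₘ y` for large `m` keeps this bound
and gives a block on `(n, m]` of norm at most `C (C + 1)`. Repeating beyond `m` produces a
bounded horizontally block sequence on which `‖T xₖ‖` stays above `ε`.
-/

open Filter Topology

section SchauderProjections

variable {𝕜 X Y : Type*} [NontriviallyNormedField 𝕜]
  [NormedAddCommGroup X] [NormedSpace 𝕜 X] [NormedAddCommGroup Y] [NormedSpace 𝕜 Y]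
  {P : ℕ → X →L[𝕜] X}

theorem apply_apply_of_comp_eq_min (hP : ∀ m n, (P m).comp (P n) = P (min m n))
    (m n : ℕ) (x : X) : P m (P n x) = P (min m n) x := by
  rw [← hP m n, ContinuousLinearMap.comp_apply]

theorem apply_eq_zero_of_block (hP : ∀ m n, (P m).comp (P n) = P (min m n)) {a b : ℕ}
    (hab : a ≤ b) {x : X} (hx : x = P b x - P a x) : P a x = 0 := by
  rw [hx, map_sub, apply_apply_of_comp_eq_min hP, apply_apply_of_comp_eq_min hP,
    min_eq_left hab, min_self, sub_self]

theorem norm_apply_le_of_block (hP : ∀ m n, (P m).comp (P n) = P (min m n))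
    (T : X →L[𝕜] Y) {a b : ℕ} (hab : a ≤ b) {x : X} (hx : x = P b x - P a x) :
    ‖T x‖ ≤ ‖T.comp (P a) - T‖ * ‖x‖ := by
  have hTx : (T.comp (P a) - T) x = -T x := by simp [apply_eq_zero_of_block hP hab hx]
  simpa [hTx] using (T.comp (P a) - T).le_opNorm x

theorem tendsto_norm_apply_block_of_tendsto_comp
    (hP : ∀ m n, (P m).comp (P n) = P (min m n)) {T : X →L[𝕜] Y}
    (hT : Tendsto (fun n => T.comp (P n)) atTop (𝓝 T)) {x : ℕ → X} {M : ℝ}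
    (hM : ∀ k, ‖x k‖ ≤ M) {a b : ℕ → ℕ} (hab : ∀ k, a k < b k) (hba : ∀ k, b k ≤ a (k + 1))
    (hx : ∀ k, x k = P (b k) (x k) - P (a k) (x k)) :
    Tendsto (fun k => ‖T (x k)‖) atTop (𝓝 0) := by
  have ha : Tendsto a atTop atTop :=
    (strictMono_nat_of_lt_succ fun k => (hab k).trans_le (hba k)).tendsto_atTop
  have hbound : Tendsto (fun k => ‖T.comp (P (a k)) - T‖ * M) atTop (𝓝 0) := by
    simpa using ((tendsto_iff_norm_sub_tendsto_zero.mp hT).comp ha).mul_const M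
  refine squeeze_zero (fun k => norm_nonneg _) (fun k => ?_) hbound
  exact (norm_apply_le_of_block hP T (hab k).le (hx k)).trans
    (mul_le_mul_of_nonneg_left (hM k) (norm_nonneg _))

theorem exists_opNorm_le_of_tendsto_apply [CompleteSpace X]
    (hP_lim : ∀ x : X, Tendsto (fun n => P n x) atTop (𝓝 x)) : ∃ C, ∀ n, ‖P n‖ ≤ C :=
  banach_steinhaus fun x => by
    obtain ⟨C, hC⟩ := (hP_lim x).norm.bddAbove_range
    exact ⟨C, fun n => hC ⟨n, rfl⟩⟩

end SchauderProjections

section DenselyNormed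

variable {𝕜 X Y : Type*} [DenselyNormedField 𝕜]
  [NormedAddCommGroup X] [NormedSpace 𝕜 X] [NormedAddCommGroup Y] [NormedSpace 𝕜 Y]
  {P : ℕ → X →L[𝕜] X}

theorem exists_tail_of_lt_opNorm {C : ℝ} (hC : ∀ n, ‖P n‖ ≤ C)
    (hP : ∀ m n, (P m).comp (P n) = P (min m n)) {T : X →L[𝕜] Y} {n : ℕ} {δ : ℝ}
    (hδ : δ < ‖T.comp (P n) - T‖) : ∃ y, P n y = 0 ∧ ‖y‖ ≤ C + 1 ∧ δ < ‖T y‖ := by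
  obtain ⟨x, hx1, hδx⟩ := (T.comp (P n) - T).exists_lt_apply_of_lt_opNorm hδ
  have hC0 : 0 ≤ C := (norm_nonneg _).trans (hC 0)
  refine ⟨P n x - x, ?_, ?_, ?_⟩
  · rw [map_sub, apply_apply_of_comp_eq_min hP, min_self, sub_self]
  · calc ‖P n x - x‖ ≤ ‖P n‖ * ‖x‖ + ‖x‖ :=
          (norm_sub_le _ _).trans (by gcongr; exact (P n).le_opNorm x)
      _ ≤ C * 1 + 1 := by gcongr; exact hC n
      _ = C + 1 := by ring
  · simpa using hδx

theorem exists_block_of_lt_opNorm {C : ℝ} (hC : ∀ n, ‖P n‖ ≤ C)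
    (hP : ∀ m n, (P m).comp (P n) = P (min m n))
    (hP_lim : ∀ x : X, Tendsto (fun n => P n x) atTop (𝓝 x)) {T : X →L[𝕜] Y} {n : ℕ} {δ : ℝ}
    (hδ : δ < ‖T.comp (P n) - T‖) :
    ∃ m > n, ∃ z, z = P m z - P n z ∧ ‖z‖ ≤ C * (C + 1) ∧ δ < ‖T z‖ := by
  obtain ⟨y, hy0, hy, hTy⟩ := exists_tail_of_lt_opNorm hC hP hδ
  have hlarge : ∀ᶠ m in atTop, δ < ‖T (P m y)‖ :=
    ((T.continuous.tendsto y).comp (hP_lim y)).norm.eventually (eventually_gt_nhds hTy)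
  obtain ⟨m, hm, hnm⟩ := (hlarge.and (eventually_gt_atTop n)).exists
  refine ⟨m, hnm, P m y, ?_, ?_, hm⟩
  · rw [apply_apply_of_comp_eq_min hP, apply_apply_of_comp_eq_min hP, min_self,
      min_eq_left hnm.le, hy0, sub_zero]
  · exact ((P m).le_opNorm y).trans
      (mul_le_mul (hC m) hy (norm_nonneg y) ((norm_nonneg _).trans (hC 0)))

end DenselyNormed

theorem exists_successive_of_forall_exists {α : Type*} {Q : ℕ → ℕ → α → Prop}
    (h : ∀ N, ∃ n ≥ N, ∃ m > n, ∃ z, Q n m z) :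
    ∃ (a b : ℕ → ℕ) (x : ℕ → α),
      (∀ k, a k < b k) ∧ (∀ k, b k ≤ a (k + 1)) ∧ ∀ k, Q (a k) (b k) (x k) := by
  choose n hNn m hnm z hz using h
  -- the `k`-th block starts at or after `m^[k] 0`, where the previous one ended
  refine ⟨fun k => n (m^[k] 0), fun k => m (m^[k] 0), fun k => z (m^[k] 0),
    fun k => hnm _, fun k => ?_, fun k => hz _⟩
  simpa only [Function.iterate_succ_apply'] using hNn (m^[k + 1] 0)

theorem stmt14_general (X Y : Type*) [NormedAddCommGroup X] [NormedSpace ℂ X] [CompleteSpace X]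
    [NormedAddCommGroup Y] [NormedSpace ℂ Y]
    (P : ℕ → X →L[ℂ] X)
    (hP_proj : ∀ m n, (P m).comp (P n) = P (min m n))
    (hP_lim : ∀ x : X, Tendsto (fun n => P n x) atTop (𝓝 x))
    (T : X →L[ℂ] Y) :
    (∀ (x : ℕ → X) (M : ℝ), (∀ k, ‖x k‖ ≤ M) →
        ∀ a b : ℕ → ℕ, (∀ k, a k < b k) → (∀ k, b k ≤ a (k + 1)) →
          (∀ k, x k = P (b k) (x k) - P (a k) (x k)) →
          Tendsto (fun k => ‖T (x k)‖) atTop (𝓝 0)) ↔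
      Tendsto (fun n => T.comp (P n)) atTop (𝓝 T) := by
  refine ⟨fun h => ?_, fun hT x M hM a b hab hba hx =>
    tendsto_norm_apply_block_of_tendsto_comp hP_proj hT hM hab hba hx⟩
  by_contra hT
  obtain ⟨C, hC⟩ := exists_opNorm_le_of_tendsto_apply hP_lim
  obtain ⟨ε, hε, hfar⟩ : ∃ ε > 0, ∀ N, ∃ n ≥ N, ε ≤ ‖T.comp (P n) - T‖ := by
    simpa [Metric.tendsto_atTop, dist_eq_norm] using hT
  obtain ⟨a, b, x, hab, hba, hx⟩ := exists_successive_of_forall_exists fun N => by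
    obtain ⟨n, hNn, hn⟩ := hfar N
    exact ⟨n, hNn, exists_block_of_lt_opNorm hC hP_proj hP_lim ((half_lt_self hε).trans_le hn)⟩
  have hTx := h x _ (fun k => (hx k).2.1) a b hab hba (fun k => (hx k).1)
  obtain ⟨k, hk⟩ := (hTx.eventually (gt_mem_nhds (half_pos hε))).exists
  exact lt_asymm hk (hx k).2.2

/-- Let `X` have a Schauder decomposition with projections `(P n)`, `Y` a
Banach space, and `T : X → Y` bounded linear.  Then the following are equivalent:
(i) for every bounded horizontally block sequence `(x k)` (i.e. `x k = P_{I_k} x k` for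
successive intervals `I_k = (a k, b k]`), `lim_k ‖T (x k)‖ = 0`;
(ii) `T = lim_n T ∘ P n` in operator norm.  (Such `T` are the horizontally compact ones.) -/
theorem stmt14 (X Y : Type*) [NormedAddCommGroup X] [NormedSpace ℂ X] [CompleteSpace X]
    [NormedAddCommGroup Y] [NormedSpace ℂ Y] [CompleteSpace Y]
    (P : ℕ → X →L[ℂ] X)
    (hP_proj : ∀ m n, (P m).comp (P n) = P (min m n))
    (hP_lim : ∀ x : X, Tendsto (fun n => P n x) atTop (𝓝 x))
    (T : X →L[ℂ] Y) :
    (∀ (x : ℕ → X) (M : ℝ), (∀ k, ‖x k‖ ≤ M) →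
        ∀ a b : ℕ → ℕ, (∀ k, a k < b k) → (∀ k, b k ≤ a (k + 1)) →
          (∀ k, x k = P (b k) (x k) - P (a k) (x k)) →
          Tendsto (fun k => ‖T (x k)‖) atTop (𝓝 0)) ↔
      Tendsto (fun n => T.comp (P n)) atTop (𝓝 T) :=
  stmt14_general X Y P hP_proj hP_lim T
end

section
/- Let X be a Banach space with a Schauder decomposition with associated projections (P_n). If X has the scalar-plus-horizontally-approximable property (every bounded operator on X is λI + A with A ∈ HA(X)) and X is infinite dimensional, then the Schauder decomposition (X_n) is shrinking. -/
open Filter Topology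

/-!
Fix a functional `g`, a vector `x₀ ≠ 0` and write the rank-one operator `g ⊗ x₀ = c + A` with
`P_n A P_n → A`. If `c = 0`, then `g = h ∘ A` for a functional `h` with `h x₀ = 1`, and it is the
limit of `h ∘ P_n A P_n = (h P_n A) ∘ P_n`. If `c ≠ 0`, compress by `Q_n = 1 - P_n`: the
compression of `A` equals that of `A - P_n A P_n`, and the compression of `g ⊗ x₀` is
`(g ∘ Q_n) ⊗ Q_n x₀`; both tend to `0` because `‖Q_n‖` is bounded (Banach–Steinhaus). So
`c Q_n → 0`, and since an idempotent of norm `< 1` vanishes, `P_N = 1` for some `N`.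
-/

theorem exists_forall_norm_le_of_tendsto_apply {𝕜 E F : Type*} [NontriviallyNormedField 𝕜]
    [NormedAddCommGroup E] [NormedSpace 𝕜 E] [CompleteSpace E]
    [NormedAddCommGroup F] [NormedSpace 𝕜 F] {T : ℕ → E →L[𝕜] F} {f : E → F}
    (hT : ∀ x, Tendsto (fun n => T n x) atTop (𝓝 (f x))) : ∃ C, ∀ n, ‖T n‖ ≤ C :=
  banach_steinhaus fun x =>
    let ⟨C, hC⟩ := (hT x).norm.bddAbove_range
    ⟨C, fun n => hC ⟨n, rfl⟩⟩

theorem IsIdempotentElem.eq_zero_of_norm_lt_one {R : Type*} [NormedRing R] {q : R}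
    (hq : IsIdempotentElem q) (h : ‖q‖ < 1) : q = 0 := by
  by_contra hne
  have hpos : 0 < ‖q‖ := norm_pos_iff.2 hne
  have hle : ‖q‖ ≤ ‖q‖ * ‖q‖ := (congrArg norm hq.eq).symm.trans_le (norm_mul_le q q)
  nlinarith

section IdempotentSequence

variable {R : Type*} [NormedRing R] {p : ℕ → R} {C : ℝ}

theorem tendsto_one_sub_mul_mul_one_sub_of_tendsto (hp : ∀ n, IsIdempotentElem (p n))
    (hC : ∀ n, ‖p n‖ ≤ C) {a : R} (ha : Tendsto (fun n => p n * a * p n) atTop (𝓝 a)) :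
    Tendsto (fun n => (1 - p n) * a * (1 - p n)) atTop (𝓝 0) := by
  have hq : ∀ n, ‖1 - p n‖ ≤ ‖(1 : R)‖ + C := fun n =>
    (norm_sub_le _ _).trans (add_le_add_right (hC n) _)
  have hcorner : ∀ n,
      (1 - p n) * a * (1 - p n) = (1 - p n) * (a - p n * a * p n) * (1 - p n) := by
    intro n
    have h : (1 - p n) * (a - p n * a * p n) * (1 - p n)
        = (1 - p n) * a * (1 - p n) - ((1 - p n) * p n) * a * (p n * (1 - p n)) := by
      noncomm_ring
    rw [h, (hp n).one_sub_mul_self, (hp n).mul_one_sub_self, zero_mul, zero_mul, sub_zero]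
  have hdist : Tendsto (fun n => ‖a - p n * a * p n‖) atTop (𝓝 0) := by
    simpa [norm_sub_rev] using (tendsto_iff_norm_sub_tendsto_zero.1 ha)
  refine squeeze_zero_norm (fun n => ?_) (by simpa using hdist.const_mul ((‖(1 : R)‖ + C) ^ 2))
  rw [hcorner n]
  calc ‖(1 - p n) * (a - p n * a * p n) * (1 - p n)‖
      ≤ ‖1 - p n‖ * ‖a - p n * a * p n‖ * ‖1 - p n‖ := norm_mul₃_le
    _ ≤ (‖(1 : R)‖ + C) * ‖a - p n * a * p n‖ * (‖(1 : R)‖ + C) :=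
      mul_le_mul (mul_le_mul_of_nonneg_right (hq n) (norm_nonneg _)) (hq n) (norm_nonneg _)
        (mul_nonneg ((norm_nonneg _).trans (hq 0)) (norm_nonneg _))
    _ = (‖(1 : R)‖ + C) ^ 2 * ‖a - p n * a * p n‖ := by ring

theorem exists_eq_one_of_tendsto_one_sub_mul_smul_one_add_mul_one_sub {𝕜 : Type*}
    [NormedField 𝕜] [NormedAlgebra 𝕜 R] (hp : ∀ n, IsIdempotentElem (p n))
    (hC : ∀ n, ‖p n‖ ≤ C) {a t : R} {c : 𝕜} (hc : c ≠ 0) (hta : t = c • 1 + a)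
    (ha : Tendsto (fun n => p n * a * p n) atTop (𝓝 a))
    (ht : Tendsto (fun n => (1 - p n) * t * (1 - p n)) atTop (𝓝 0)) :
    ∃ N, p N = 1 := by
  have hsplit : ∀ n,
      (1 - p n) * t * (1 - p n) = c • (1 - p n) + (1 - p n) * a * (1 - p n) := by
    intro n
    rw [hta, mul_add, add_mul, mul_smul_one, smul_mul_assoc, (hp n).one_sub.eq]
  have hsmul : Tendsto (fun n => c • (1 - p n)) atTop (𝓝 0) := by
    simpa [hsplit] using ht.sub (tendsto_one_sub_mul_mul_one_sub_of_tendsto hp hC ha)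
  have hq : Tendsto (fun n => 1 - p n) atTop (𝓝 0) := by
    simpa [smul_smul, inv_mul_cancel₀ hc] using hsmul.const_smul c⁻¹
  obtain ⟨N, hN⟩ :=
    (hq.norm.eventually (eventually_lt_nhds (by simp : ‖(0 : R)‖ < 1))).exists
  exact ⟨N, (sub_eq_zero.1 ((hp N).one_sub.eq_zero_of_norm_lt_one hN)).symm⟩

end IdempotentSequence

section Operators

variable {𝕜 E : Type*} [NontriviallyNormedField 𝕜] [NormedAddCommGroup E] [NormedSpace 𝕜 E]
  {P : ℕ → E →L[𝕜] E}

theorem tendsto_one_sub_mul_smulRight_mul_one_sub {C : ℝ} (hC : ∀ n, ‖P n‖ ≤ C)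
    (hP : ∀ x, Tendsto (fun n => P n x) atTop (𝓝 x)) (g : E →L[𝕜] 𝕜) (x₀ : E) :
    Tendsto (fun n => (1 - P n) * g.smulRight x₀ * (1 - P n)) atTop (𝓝 0) := by
  have hq : ∀ n, ‖1 - P n‖ ≤ 1 + C := fun n =>
    (norm_sub_le _ _).trans (add_le_add ContinuousLinearMap.norm_id_le (hC n))
  have hrank : ∀ n, (1 - P n) * g.smulRight x₀ * (1 - P n)
      = (g.comp (1 - P n)).smulRight ((1 - P n) x₀) := by
    intro n; ext x; simp
  have hx₀ : Tendsto (fun n => ‖(1 - P n) x₀‖) atTop (𝓝 0) := by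
    simpa [norm_sub_rev] using tendsto_iff_norm_sub_tendsto_zero.1 (hP x₀)
  refine squeeze_zero_norm (fun n => ?_) (by simpa using hx₀.const_mul (‖g‖ * (1 + C)))
  rw [hrank n, ContinuousLinearMap.norm_smulRight_apply]
  exact mul_le_mul_of_nonneg_right
    ((g.opNorm_comp_le _).trans (mul_le_mul_of_nonneg_left (hq n) (norm_nonneg g))) (norm_nonneg _)

theorem comp_mem_closure_iUnion_range_comp_of_tendsto {F : Type*} [NormedAddCommGroup F]
    [NormedSpace 𝕜 F] {A : E →L[𝕜] E}
    (hA : Tendsto (fun n => ((P n).comp A).comp (P n)) atTop (𝓝 A)) (φ : E →L[𝕜] F) :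
    φ.comp A ∈ closure (⋃ n, Set.range fun f : E →L[𝕜] F => f.comp (P n)) := by
  refine mem_closure_of_tendsto
    (((ContinuousLinearMap.compL 𝕜 E E F φ).continuous.tendsto A).comp hA)
    (Eventually.of_forall fun n => Set.mem_iUnion.2 ⟨n, (φ.comp (P n)).comp A, ?_⟩)
  simp [ContinuousLinearMap.comp_assoc]

end Operators

theorem stmt15_general (X : Type*) [NormedAddCommGroup X] [NormedSpace ℂ X] [CompleteSpace X]
    (P : ℕ → X →L[ℂ] X)
    (hP_proj : ∀ m n, (P m).comp (P n) = P (min m n))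
    (hP_lim : ∀ x : X, Tendsto (fun n => P n x) atTop (𝓝 x))
    (hsha : ∀ T : X →L[ℂ] X, ∃ (c : ℂ) (A : X →L[ℂ] X),
      Tendsto (fun n => ((P n).comp A).comp (P n)) atTop (𝓝 A) ∧
        T = c • ContinuousLinearMap.id ℂ X + A) :
    Dense (⋃ n, Set.range fun f : X →L[ℂ] ℂ => f.comp (P n)) := by
  intro g
  rcases subsingleton_or_nontrivial X with hX | hX
  · exact subset_closure (Set.mem_iUnion.2 ⟨0, g, Subsingleton.elim _ _⟩)
  obtain ⟨x₀, hx₀⟩ := exists_ne (0 : X)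
  obtain ⟨h, hh⟩ := SeparatingDual.exists_eq_one (R := ℂ) hx₀
  obtain ⟨C, hC⟩ := exists_forall_norm_le_of_tendsto_apply hP_lim
  have hidem : ∀ n, IsIdempotentElem (P n) := fun n => (hP_proj n n).trans (by rw [min_self])
  obtain ⟨c, A, hA, hT⟩ := hsha (g.smulRight x₀)
  rcases eq_or_ne c 0 with rfl | hc
  · have hAg : A = g.smulRight x₀ := by simpa using hT.symm
    have hg : g = h.comp A := by
      ext x
      simp [hAg, hh]
    exact hg ▸ comp_mem_closure_iUnion_range_comp_of_tendsto hA h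
  · obtain ⟨N, hN⟩ :=
      exists_eq_one_of_tendsto_one_sub_mul_smul_one_add_mul_one_sub hidem hC hc hT hA
        (tendsto_one_sub_mul_smulRight_mul_one_sub hC hP_lim g x₀)
    exact subset_closure (Set.mem_iUnion.2 ⟨N, g, by rw [hN]; exact g.comp_id⟩)

/-- If an infinite dimensional Banach space `X` with a Schauder decomposition
(projections `P n`) has the scalar-plus-horizontally-approximable property (every bounded
operator is `λI + A` with `A` horizontally approximable), then the Schauder decomposition is
shrinking, i.e. `⋃_n P_n^*(X^*)` is norm-dense in `X^*`. -/
theorem stmt15 (X : Type*) [NormedAddCommGroup X] [NormedSpace ℂ X] [CompleteSpace X]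
    (hinf : ¬ FiniteDimensional ℂ X)
    (P : ℕ → X →L[ℂ] X)
    (hP_proj : ∀ m n, (P m).comp (P n) = P (min m n))
    (hP_lim : ∀ x : X, Tendsto (fun n => P n x) atTop (𝓝 x))
    (hsha : ∀ T : X →L[ℂ] X, ∃ (c : ℂ) (A : X →L[ℂ] X),
      Tendsto (fun n => ((P n).comp A).comp (P n)) atTop (𝓝 A) ∧
        T = c • ContinuousLinearMap.id ℂ X + A) :
    Dense (⋃ n, Set.range fun f : X →L[ℂ] ℂ => f.comp (P n)) :=
  stmt15_general X P hP_proj hP_lim hsha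
end

section
/- Let X and Y be Banach spaces with shrinking Schauder decompositions that are C-finitely Fredholm equivalent via operators (L_n), (R_n). For A ∈ HA₀₀(X) with A = P_m A P_m, the operator φ_n(A) = L_n A R_n satisfies: φ_n(A) − φ_m(A) is compact for all n ≥ m, and if also B = P_n B P_n then φ_n(AB) − φ_n(A)φ_n(B) is compact. -/
/-!
Everything is algebra modulo the ideal of compact operators. Since `A = P m A P m`,
`L n A R n = (L n P m) A (P m R n) ∼ L m A R m` by compatibility. For the second part,
`φ_n(A) φ_n(B) = L n A (R n L n) B R n ∼ L n A P n B R n = φ_n(A B)`, because `P n B = B`.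
-/

namespace ContinuousLinearMap

variable {R : Type*} [Ring R] {E F G : Type*}
  [TopologicalSpace E] [AddCommGroup E] [Module R E]
  [TopologicalSpace F] [AddCommGroup F] [Module R F] [IsTopologicalAddGroup F]
  [TopologicalSpace G] [AddCommGroup G] [Module R G]

/-- `T ∼ S` in the notation of the paper. -/
def EqModCompact (T S : E →L[R] F) : Prop :=
  IsCompactOperator ⇑(T - S)

namespace EqModCompact

theorem symm {T S : E →L[R] F} (h : EqModCompact T S) : EqModCompact S T := by
  simpa [EqModCompact] using h.neg

theorem trans {T S U : E →L[R] F} (hTS : EqModCompact T S) (hSU : EqModCompact S U) :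
    EqModCompact T U := by
  simpa [EqModCompact] using hTS.add hSU

theorem comp_left [IsTopologicalAddGroup G] (U : F →L[R] G) {T S : E →L[R] F}
    (h : EqModCompact T S) :
    EqModCompact (U.comp T) (U.comp S) := by
  rw [EqModCompact, ← comp_sub, coe_comp]
  exact h.clm_comp U

theorem comp_right {T S : E →L[R] F} (h : EqModCompact T S) (U : G →L[R] E) :
    EqModCompact (T.comp U) (S.comp U) := by
  rw [EqModCompact, ← sub_comp, coe_comp]
  exact h.comp_clm U

theorem comp [IsTopologicalAddGroup G] {T T' : F →L[R] G} {S S' : E →L[R] F}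
    (hT : EqModCompact T T') (hS : EqModCompact S S') : EqModCompact (T.comp S) (T'.comp S') :=
  (hT.comp_right S).trans (hS.comp_left T')

end EqModCompact

end ContinuousLinearMap

open Filter Topology ContinuousLinearMap

theorem stmt17_general (X Y : Type*) [NormedAddCommGroup X] [NormedSpace ℂ X]
    [NormedAddCommGroup Y] [NormedSpace ℂ Y]
    (P : ℕ → X →L[ℂ] X) (Q : ℕ → Y →L[ℂ] Y)
    (hP_proj : ∀ m n, (P m).comp (P n) = P (min m n))
    (L : ℕ → X →L[ℂ] Y) (R : ℕ → Y →L[ℂ] X)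
    (hcompat : ∀ m n, m ≤ n →
      IsCompactOperator ⇑(L m - (L n).comp (P m)) ∧
      IsCompactOperator ⇑(L m - (Q m).comp (L n)) ∧
      IsCompactOperator ⇑(R m - (R n).comp (Q m)) ∧
      IsCompactOperator ⇑(R m - (P m).comp (R n)))
    (hfred : ∀ n, IsCompactOperator ⇑((R n).comp (L n) - P n) ∧
      IsCompactOperator ⇑((L n).comp (R n) - Q n))
    (m : ℕ) (A : X →L[ℂ] X) (hA : A = ((P m).comp A).comp (P m)) :
    (∀ n, m ≤ n →
      IsCompactOperator
        ⇑(((L n).comp (A.comp (R n))) - ((L m).comp (A.comp (R m))))) ∧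
    (∀ n, m ≤ n → ∀ B : X →L[ℂ] X, B = ((P n).comp B).comp (P n) →
      IsCompactOperator
        ⇑(((L n).comp ((A.comp B).comp (R n))) -
          ((L n).comp (A.comp (R n))).comp ((L n).comp (B.comp (R n))))) := by
  refine ⟨fun n hmn => ?_, fun n _ B hB => ?_⟩
  · obtain ⟨hL, -, -, hR⟩ := hcompat m n hmn
    change EqModCompact _ _ at hL hR
    have hφ : (L n).comp (A.comp (R n)) =
        ((L n).comp (P m)).comp (A.comp ((P m).comp (R n))) := by
      nth_rewrite 1 [hA]
      rfl
    rw [← EqModCompact, hφ]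
    exact hL.symm.comp (hR.symm.comp_left A)
  · have hPB : (P n).comp B = B := by
      rw [hB, ← comp_assoc, ← comp_assoc, hP_proj, min_self]
    have hφ : ((L n).comp (A.comp (R n))).comp ((L n).comp (B.comp (R n))) =
        (L n).comp (A.comp (((R n).comp (L n)).comp (B.comp (R n)))) := rfl
    have hRL : EqModCompact ((R n).comp (L n)) (P n) := (hfred n).1
    rw [← EqModCompact, hφ]
    refine EqModCompact.symm ?_
    simpa only [← comp_assoc, hPB] using
      ((hRL.comp_right (B.comp (R n))).comp_left A).comp_left (L n)

/-- Let `X`, `Y` have shrinking Schauder decompositions that are `C`-finitely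
Fredholm equivalent via `(L n)`, `(R n)`.  For `A ∈ HA₀₀(X)` with `A = P m A P m`, the
operators `φ_n(A) = L n ∘ A ∘ R n` satisfy: `φ_n(A) − φ_m(A)` is compact for all `n ≥ m`,
and if also `B = P n B P n` then `φ_n(A B) − φ_n(A) φ_n(B)` is compact. -/
theorem stmt17 (X Y : Type*) [NormedAddCommGroup X] [NormedSpace ℂ X] [CompleteSpace X]
    [NormedAddCommGroup Y] [NormedSpace ℂ Y] [CompleteSpace Y]
    (P : ℕ → X →L[ℂ] X) (Q : ℕ → Y →L[ℂ] Y)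
    (hP_proj : ∀ m n, (P m).comp (P n) = P (min m n))
    (hP_lim : ∀ x : X, Tendsto (fun n => P n x) atTop (𝓝 x))
    (hQ_proj : ∀ m n, (Q m).comp (Q n) = Q (min m n))
    (hQ_lim : ∀ y : Y, Tendsto (fun n => Q n y) atTop (𝓝 y))
    (hP_shr : Dense (⋃ n, Set.range fun f : X →L[ℂ] ℂ => f.comp (P n)))
    (hQ_shr : Dense (⋃ n, Set.range fun f : Y →L[ℂ] ℂ => f.comp (Q n)))
    (C : ℝ) (hC : 1 ≤ C)
    (L : ℕ → X →L[ℂ] Y) (R : ℕ → Y →L[ℂ] X)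
    (hLbdd : BddAbove (Set.range fun n => ‖L n‖))
    (hRbdd : BddAbove (Set.range fun n => ‖R n‖))
    (hbound : (⨆ n, ‖L n‖) * (⨆ n, ‖R n‖) ≤ C)
    (hcompat : ∀ m n, m ≤ n →
      IsCompactOperator ⇑(L m - (L n).comp (P m)) ∧
      IsCompactOperator ⇑(L m - (Q m).comp (L n)) ∧
      IsCompactOperator ⇑(R m - (R n).comp (Q m)) ∧
      IsCompactOperator ⇑(R m - (P m).comp (R n)))
    (hfred : ∀ n, IsCompactOperator ⇑((R n).comp (L n) - P n) ∧
      IsCompactOperator ⇑((L n).comp (R n) - Q n))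
    (m : ℕ) (A : X →L[ℂ] X) (hA : A = ((P m).comp A).comp (P m)) :
    (∀ n, m ≤ n →
      IsCompactOperator
        ⇑(((L n).comp (A.comp (R n))) - ((L m).comp (A.comp (R m))))) ∧
    (∀ n, m ≤ n → ∀ B : X →L[ℂ] X, B = ((P n).comp B).comp (P n) →
      IsCompactOperator
        ⇑(((L n).comp ((A.comp B).comp (R n))) -
          ((L n).comp (A.comp (R n))).comp ((L n).comp (B.comp (R n))))) :=
  stmt17_general X Y P Q hP_proj L R hcompat hfred m A hA
end

section
/- Let V be a Banach space with a normalized 1-unconditional basis, identified with a space of scalar matrices in the natural way, and for a finitely supported scalar matrix A = (a_{m,n}) define ‖A‖_u as the smallest norm dominating the operator norm ‖·‖_{L(ℓ_p)} that makes the matrix units E_{i,j} a 1-unconditional system; concretely, for 1 < p < ∞ with conjugate q, and the algebra generated by matrices A = (a_{m,n} I_X) acting on ℓ_p(X) for X of trivial type, one has ‖A‖_{L(ℓ_p(X))} = sup { Σ_m Σ_n |x_n y_m a_{m,n}| : ‖(x_n)‖_p ‖(y_m)‖_q ≤ 1 } = ‖(|a_{m,n}|)‖_{L(ℓ_p)}.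 -/
/-!
Coordinatewise, `‖Σₙ aₘₙ xₙ‖ ≤ Σₙ |aₘₙ| ‖xₙ‖`, so `Â` is dominated by `|A|` acting on the sequence
of norms `(‖xₙ‖)`, and `‖Â‖ ≤ ‖|A|‖`. Conversely, trivial type provides unit vectors `vₙ ∈ X`, one
for each of the finitely many nonzero columns, spanning an almost isometric copy of `ℓ₁`; then
`ξₙ = ‖xₙ‖ vₙ` has `‖ξ‖ ≤ ‖x‖` while every coordinate of `Âξ` has norm at least `(1 - ε)` times
that of `|A| (‖xₙ‖)ₙ`. Finally, `‖|A|‖` is the stated supremum by Hölder's inequality and its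
equality case `yₘ ∝ |zₘ|^(p-1)`.
-/

open ENNReal NNReal

/-- A Banach space has trivial (Rademacher) type iff it contains the spaces `ℓ₁ⁿ` uniformly:
for every `n` and `ε > 0` there are vectors `x 1, …, x n` in the unit ball on which every
linear combination almost attains the `ℓ₁`-lower bound. -/
def HasTrivialType (X : Type*) [NormedAddCommGroup X] [NormedSpace ℂ X] : Prop :=
  ∀ n : ℕ, ∀ ε : ℝ, 0 < ε → ∃ x : Fin n → X, (∀ j, ‖x j‖ ≤ 1) ∧
    ∀ c : Fin n → ℂ, (1 - ε) * ∑ j, ‖c j‖ ≤ ‖∑ j, c j • x j‖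

theorem HasTrivialType.exists_finset_family {X : Type*} [NormedAddCommGroup X] [NormedSpace ℂ X]
    (hX : HasTrivialType X) {κ : Type*} (s : Finset κ) {ε : ℝ} (hε : 0 < ε) :
    ∃ v : κ → X, (∀ n, ‖v n‖ ≤ 1) ∧
      ∀ c : κ → ℂ, (1 - ε) * ∑ n ∈ s, ‖c n‖ ≤ ‖∑ n ∈ s, c n • v n‖ := by
  classical
  obtain ⟨x, hx₁, hx⟩ := hX s.card ε hε
  let e := s.equivFin
  refine ⟨fun n => if hn : n ∈ s then x (e ⟨n, hn⟩) else 0, fun n => ?_, fun c => ?_⟩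
  · dsimp only
    split_ifs
    · exact hx₁ _
    · simp
  · rw [← Finset.sum_coe_sort s, ← e.symm.sum_comp, ← Finset.sum_coe_sort s, ← e.symm.sum_comp]
    simpa using hx fun j => c (e.symm j)

namespace lp

variable {α : Type*} {E : α → Type*} [∀ i, NormedAddCommGroup (E i)] {p : ℝ≥0∞}

def absVec (𝕜 : Type*) [RCLike 𝕜] (f : lp E p) : lp (fun _ : α => 𝕜) p :=
  ⟨fun i => (‖f i‖ : 𝕜), (lp.memℓp f).norm.mono' fun i => by simp⟩

variable {𝕜 : Type*} [RCLike 𝕜]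

@[simp]
theorem absVec_apply (f : lp E p) (i : α) : absVec 𝕜 f i = (‖f i‖ : 𝕜) := rfl

theorem norm_absVec_apply (f : lp E p) (i : α) : ‖absVec 𝕜 f i‖ = ‖f i‖ := by simp

theorem norm_absVec (hp : p ≠ 0) (f : lp E p) : ‖absVec 𝕜 f‖ = ‖f‖ :=
  le_antisymm (norm_mono hp fun i => (norm_absVec_apply f i).le)
    (norm_mono hp fun i => (norm_absVec_apply f i).ge)

theorem exists_norm_le_one_tsum_mul_eq_norm {q : ℝ≥0∞} (hpq : p.toReal.HolderConjugate q.toReal)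
    (z : lp E p) : ∃ y : lp (fun _ : α => ℝ) q, ‖y‖ ≤ 1 ∧ ∑' i, ‖z i‖ * |y i| = ‖z‖ := by
  rcases eq_or_ne z 0 with rfl | hz
  · exact ⟨0, by simp, by simp⟩
  have hz₀ : 0 < ‖z‖ := (norm_nonneg' z).lt_of_ne' (mt norm_eq_zero_iff.mp hz)
  set r := p.toReal
  let u : α → ℝ := fun i => (‖z i‖ / ‖z‖) ^ r
  have hu : HasSum u 1 := by
    rw [show u = fun i => ‖z i‖ ^ r / ‖z‖ ^ r from
        funext fun i => Real.div_rpow (norm_nonneg _) hz₀.le r,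
      ← div_self (a := ‖z‖ ^ r) (by positivity)]
    exact (hasSum_norm hpq.pos z).div_const _
  -- the extremal vector for Hölder's inequality
  let w : α → ℝ := fun i => (‖z i‖ / ‖z‖) ^ (r - 1)
  have hw_rpow : ∀ i, ‖w i‖ ^ q.toReal = u i := fun i => by
    rw [Real.norm_of_nonneg (by positivity), ← Real.rpow_mul (by positivity),
      hpq.sub_one_mul_conj]
  have hw_mul : ∀ i, ‖z i‖ * |w i| = ‖z‖ * u i := fun i => by
    have hr : r - 1 + 1 ≠ 0 := by rw [sub_add_cancel]; exact hpq.pos.ne'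
    rw [abs_of_nonneg (by positivity)]
    change ‖z i‖ * (‖z i‖ / ‖z‖) ^ (r - 1) = ‖z‖ * (‖z i‖ / ‖z‖) ^ r
    conv_rhs => rw [← sub_add_cancel r 1, Real.rpow_add_one' (by positivity) hr]
    field_simp
  have hw : Memℓp w q := memℓp_gen (by simpa only [hw_rpow] using hu.summable)
  refine ⟨⟨w, hw⟩, norm_le_of_tsum_le hpq.symm.pos zero_le_one ?_, ?_⟩
  · simp only [hw_rpow, hu.tsum_eq, Real.one_rpow, le_refl]
  · simp only [hw_mul, _root_.tsum_mul_left, hu.tsum_eq, mul_one]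

end lp

theorem ContinuousLinearMap.opNorm_le_opNorm_of_forall_exists {𝕜 𝕜' E F E' F' : Type*}
    [NontriviallyNormedField 𝕜] [NontriviallyNormedField 𝕜']
    [SeminormedAddCommGroup E] [NormedSpace 𝕜 E] [SeminormedAddCommGroup F] [NormedSpace 𝕜 F]
    [SeminormedAddCommGroup E'] [NormedSpace 𝕜' E'] [SeminormedAddCommGroup F']
    [NormedSpace 𝕜' F'] (T : E →L[𝕜] F) (S : E' →L[𝕜'] F')
    (h : ∀ x, ∀ c : ℝ≥0, c < 1 → ∃ y, ‖y‖ ≤ ‖x‖ ∧ c * ‖T x‖ ≤ ‖S y‖) : ‖T‖ ≤ ‖S‖ := by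
  refine T.opNorm_le_bound (norm_nonneg S) fun x => ?_
  have : ‖T x‖₊ ≤ ‖S‖₊ * ‖x‖₊ := NNReal.le_of_forall_lt_one_mul_le fun c hc => by
    obtain ⟨y, hy, hcy⟩ := h x c hc
    have : c * ‖T x‖ ≤ ‖S‖ * ‖x‖ :=
      hcy.trans ((S.le_opNorm y).trans (mul_le_mul_of_nonneg_left hy (norm_nonneg S)))
    exact_mod_cast this
  exact_mod_cast this

theorem ContinuousLinearMap.opNorm_eq_sSup_of_forall_le {𝕜 E F : Type*} [RCLike 𝕜]
    [SeminormedAddCommGroup E] [NormedSpace 𝕜 E] [SeminormedAddCommGroup F] [NormedSpace 𝕜 F]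
    (f : E →L[𝕜] F) {s : Set ℝ} (h₀ : 0 ∈ s) (hle : ∀ a ∈ s, a ≤ ‖f‖)
    (hge : ∀ x, ‖x‖ = 1 → ∃ a ∈ s, ‖f x‖ ≤ a) : ‖f‖ = sSup s := by
  have hbdd : BddAbove s := ⟨‖f‖, hle⟩
  refine le_antisymm (f.opNorm_le_of_unit_norm (le_csSup hbdd h₀) fun x hx => ?_)
    (csSup_le ⟨0, h₀⟩ hle)
  obtain ⟨a, ha, hxa⟩ := hge x hx
  exact hxa.trans (le_csSup hbdd ha)

section MatrixOperator

variable {ι κ E X : Type*} [NormedAddCommGroup E] [NormedAddCommGroup X] [NormedSpace ℂ X]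
  {p : ℝ≥0∞} [Fact (1 ≤ p)] {A : ι → κ → ℂ} {N : Finset κ}
  {S : lp (fun _ : κ => ℂ) p →L[ℂ] lp (fun _ : ι => ℂ) p}

theorem norm_apply_absVec_apply (hS : ∀ x i, S x i = ∑ n ∈ N, (‖A i n‖ : ℂ) * x n)
    (x : lp (fun _ : κ => E) p) (i : ι) :
    ‖S (lp.absVec ℂ x) i‖ = ∑ n ∈ N, ‖A i n‖ * ‖x n‖ := by
  have : ∑ n ∈ N, (‖A i n‖ : ℂ) * lp.absVec ℂ x n = ((∑ n ∈ N, ‖A i n‖ * ‖x n‖ : ℝ) : ℂ) := by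
    push_cast
    rfl
  rw [hS, this, Complex.norm_real, Real.norm_of_nonneg (by positivity)]

theorem norm_apply_le_norm_apply_absVec [NormedSpace ℂ E]
    {T : lp (fun _ : κ => E) p →L[ℂ] lp (fun _ : ι => E) p}
    (hT : ∀ x i, T x i = ∑ n ∈ N, A i n • x n) (hS : ∀ x i, S x i = ∑ n ∈ N, (‖A i n‖ : ℂ) * x n)
    (x : lp (fun _ : κ => E) p) : ‖T x‖ ≤ ‖S (lp.absVec ℂ x)‖ := by
  refine lp.norm_mono (zero_lt_one.trans_le Fact.out).ne' fun i => ?_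
  rw [hT, norm_apply_absVec_apply hS]
  exact norm_sum_le_of_le _ fun n _ => norm_smul_le _ _

theorem norm_apply_le_norm_apply_absVec_self
    (hS : ∀ x i, S x i = ∑ n ∈ N, (‖A i n‖ : ℂ) * x n) (x : lp (fun _ : κ => ℂ) p) :
    ‖S x‖ ≤ ‖S (lp.absVec ℂ x)‖ := by
  refine lp.norm_mono (zero_lt_one.trans_le Fact.out).ne' fun i => ?_
  rw [hS, norm_apply_absVec_apply hS]
  exact norm_sum_le_of_le _ fun n _ => by simp

theorem opNorm_le_opNorm_absMatrix [NormedSpace ℂ E]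
    {T : lp (fun _ : κ => E) p →L[ℂ] lp (fun _ : ι => E) p}
    (hT : ∀ x i, T x i = ∑ n ∈ N, A i n • x n) (hS : ∀ x i, S x i = ∑ n ∈ N, (‖A i n‖ : ℂ) * x n) :
    ‖T‖ ≤ ‖S‖ :=
  T.opNorm_le_bound (norm_nonneg S) fun x => calc
    ‖T x‖ ≤ ‖S (lp.absVec ℂ x)‖ := norm_apply_le_norm_apply_absVec hT hS x
    _ ≤ ‖S‖ * ‖x‖ :=
      (S.le_opNorm _).trans_eq (by rw [lp.norm_absVec (zero_lt_one.trans_le Fact.out).ne'])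

theorem HasTrivialType.exists_norm_le_and_mul_norm_le (hX : HasTrivialType X)
    {T : lp (fun _ : κ => X) p →L[ℂ] lp (fun _ : ι => X) p}
    (hT : ∀ x i, T x i = ∑ n ∈ N, A i n • x n) (hS : ∀ x i, S x i = ∑ n ∈ N, (‖A i n‖ : ℂ) * x n)
    (x : lp (fun _ : κ => E) p) {c : ℝ≥0} (hc : c < 1) :
    ∃ ξ : lp (fun _ : κ => X) p, ‖ξ‖ ≤ ‖x‖ ∧ c * ‖S (lp.absVec ℂ x)‖ ≤ ‖T ξ‖ := by
  have hp : p ≠ 0 := (zero_lt_one.trans_le Fact.out).ne'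
  obtain ⟨v, hv₁, hv⟩ := hX.exists_finset_family N (sub_pos.mpr hc : 0 < 1 - (c : ℝ))
  have hξ_le : ∀ n, ‖(‖x n‖ : ℂ) • v n‖ ≤ ‖x n‖ := fun n => by
    simpa [norm_smul] using mul_le_of_le_one_right (norm_nonneg _) (hv₁ n)
  let ξ : lp (fun _ : κ => X) p := ⟨_, (lp.memℓp x).mono' hξ_le⟩
  refine ⟨ξ, lp.norm_mono hp hξ_le, ?_⟩
  have hcoord : ∀ i, ‖((c : ℝ) • S (lp.absVec ℂ x) : lp (fun _ : ι => ℂ) p) i‖ ≤ ‖T ξ i‖ :=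
      fun i => by
    have := hv fun n => A i n * ‖x n‖
    rw [lp.coeFn_smul, Pi.smul_apply, norm_smul, norm_apply_absVec_apply hS, hT]
    simpa [mul_smul, ξ] using this
  simpa [norm_smul] using lp.norm_mono hp hcoord

theorem HasTrivialType.opNorm_absMatrix_le (hX : HasTrivialType X)
    {T : lp (fun _ : κ => X) p →L[ℂ] lp (fun _ : ι => X) p}
    (hT : ∀ x i, T x i = ∑ n ∈ N, A i n • x n) (hS : ∀ x i, S x i = ∑ n ∈ N, (‖A i n‖ : ℂ) * x n) :
    ‖S‖ ≤ ‖T‖ :=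
  S.opNorm_le_opNorm_of_forall_exists T fun x c hc => by
    obtain ⟨ξ, hξ, hcξ⟩ := hX.exists_norm_le_and_mul_norm_le hT hS x hc
    exact ⟨ξ, hξ, (mul_le_mul_of_nonneg_left (norm_apply_le_norm_apply_absVec_self hS x)
      c.coe_nonneg).trans hcξ⟩

end MatrixOperator

theorem exists_finset_forall_notMem_eq_zero {ι κ : Type*} {A : ι → κ → ℂ}
    (hA : {x : ι × κ | A x.1 x.2 ≠ 0}.Finite) : ∃ N : Finset κ, ∀ i, ∀ n ∉ N, A i n = 0 :=
  ⟨(hA.image Prod.snd).toFinset, fun i n hn => by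
    by_contra h
    exact hn ((hA.image Prod.snd).mem_toFinset.mpr ⟨(i, n), h, rfl⟩)⟩

theorem tsum_abs_mul_mul_norm_eq {ι κ : Type*} {A : ι → κ → ℂ} {N : Finset κ}
    (hN : ∀ i, ∀ n ∉ N, A i n = 0) (x : κ → ℝ) (b : ℝ) (i : ι) :
    ∑' n, |x n| * b * ‖A i n‖ = b * ∑ n ∈ N, ‖A i n‖ * |x n| := by
  rw [tsum_eq_sum fun n hn => by simp [hN i n hn], Finset.mul_sum]
  exact Finset.sum_congr rfl fun n _ => by ring

section Duality

variable {ι κ : Type*} {p q : ℝ≥0∞} [Fact (1 ≤ p)] {A : ι → κ → ℂ} {N : Finset κ}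
  {S : lp (fun _ : κ => ℂ) p →L[ℂ] lp (fun _ : ι => ℂ) p}

theorem tsum_tsum_le_opNorm (hpq : p.toReal.HolderConjugate q.toReal)
    (hN : ∀ i, ∀ n ∉ N, A i n = 0) (hS : ∀ x i, S x i = ∑ n ∈ N, (‖A i n‖ : ℂ) * x n)
    (x : lp (fun _ : κ => ℝ) p) (y : lp (fun _ : ι => ℝ) q) (hxy : ‖x‖ * ‖y‖ ≤ 1) :
    ∑' i, ∑' n, |x n| * |y i| * ‖A i n‖ ≤ ‖S‖ :=
  have hp : p ≠ 0 := (zero_lt_one.trans_le Fact.out).ne'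
  calc
  _ = ∑' i, ‖S (lp.absVec ℂ x) i‖ * ‖y i‖ := tsum_congr fun i => by
    rw [tsum_abs_mul_mul_norm_eq hN, norm_apply_absVec_apply hS, mul_comm]
    simp only [Real.norm_eq_abs]
  _ ≤ ‖S (lp.absVec ℂ x)‖ * ‖y‖ := by
    simpa only [lp.norm_absVec_apply, lp.norm_absVec hp] using
      lp.tsum_mul_le_mul_norm' hpq (lp.absVec ℝ (S (lp.absVec ℂ x))) y
  _ ≤ ‖S‖ * ‖x‖ * ‖y‖ := by
    grw [S.le_opNorm, lp.norm_absVec hp]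
    exact lp.norm_nonneg' y
  _ ≤ ‖S‖ := by
    rw [mul_assoc]
    exact mul_le_of_le_one_right (norm_nonneg S) hxy

theorem exists_norm_apply_le_tsum_tsum (hpq : p.toReal.HolderConjugate q.toReal)
    (hN : ∀ i, ∀ n ∉ N, A i n = 0) (hS : ∀ x i, S x i = ∑ n ∈ N, (‖A i n‖ : ℂ) * x n)
    (x : lp (fun _ : κ => ℂ) p) (hx : ‖x‖ = 1) :
    ∃ (x' : lp (fun _ : κ => ℝ) p) (y : lp (fun _ : ι => ℝ) q),
      ‖x'‖ * ‖y‖ ≤ 1 ∧ ‖S x‖ ≤ ∑' i, ∑' n, |x' n| * |y i| * ‖A i n‖ := by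
  obtain ⟨y, hy, hyz⟩ := lp.exists_norm_le_one_tsum_mul_eq_norm hpq (S (lp.absVec ℂ x))
  refine ⟨lp.absVec ℝ x, y, ?_, ?_⟩
  · rwa [lp.norm_absVec (zero_lt_one.trans_le Fact.out).ne', hx, one_mul]
  calc ‖S x‖ ≤ ‖S (lp.absVec ℂ x)‖ := norm_apply_le_norm_apply_absVec_self hS x
    _ = ∑' i, ‖S (lp.absVec ℂ x) i‖ * |y i| := hyz.symm
    _ = _ := tsum_congr fun i => by
      rw [tsum_abs_mul_mul_norm_eq hN, norm_apply_absVec_apply hS, mul_comm]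
      simp

end Duality

theorem stmt19_general (p q : ℝ≥0∞) (hp : 1 < p) (hp' : p ≠ ∞) (hq : p⁻¹ + q⁻¹ = 1) [Fact (1 ≤ p)]
    (X : Type*) [NormedAddCommGroup X] [NormedSpace ℂ X]
    (htriv : HasTrivialType X)
    (A : ℕ → ℕ → ℂ) (hA : {x : ℕ × ℕ | A x.1 x.2 ≠ 0}.Finite)
    (Ahat : lp (fun _ : ℕ => X) p →L[ℂ] lp (fun _ : ℕ => X) p)
    (hAhat : ∀ (x : lp (fun _ : ℕ => X) p) (m : ℕ), (Ahat x) m = ∑' n, A m n • x n)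
    (Aabs : lp (fun _ : ℕ => ℂ) p →L[ℂ] lp (fun _ : ℕ => ℂ) p)
    (hAabs : ∀ (x : lp (fun _ : ℕ => ℂ) p) (m : ℕ),
      (Aabs x) m = ∑' n, (‖A m n‖ : ℂ) * x n) :
    ‖Ahat‖ = sSup {s : ℝ | ∃ (x : lp (fun _ : ℕ => ℝ) p) (y : lp (fun _ : ℕ => ℝ) q),
        ‖x‖ * ‖y‖ ≤ 1 ∧ s = ∑' m, ∑' n, |x n| * |y m| * ‖A m n‖} ∧
      ‖Ahat‖ = ‖Aabs‖ := by
  have hpq : p.toReal.HolderConjugate q.toReal :=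
    (HolderConjugate.toReal_iff (by simpa using (toReal_lt_toReal one_ne_top hp').mpr hp)).mpr
      (holderConjugate_iff.mpr hq)
  obtain ⟨N, hN⟩ := exists_finset_forall_notMem_eq_zero hA
  have hAhat' : ∀ x m, Ahat x m = ∑ n ∈ N, A m n • x n := fun x m =>
    (hAhat x m).trans (tsum_eq_sum fun n hn => by simp [hN m n hn])
  have hAabs' : ∀ x m, Aabs x m = ∑ n ∈ N, (‖A m n‖ : ℂ) * x n := fun x m =>
    (hAabs x m).trans (tsum_eq_sum fun n hn => by simp [hN m n hn])
  have hnorm : ‖Ahat‖ = ‖Aabs‖ := le_antisymm (opNorm_le_opNorm_absMatrix hAhat' hAabs')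
    (htriv.opNorm_absMatrix_le hAhat' hAabs')
  refine ⟨hnorm.trans ?_, hnorm⟩
  refine Aabs.opNorm_eq_sSup_of_forall_le ⟨0, 0, by simp, by simp⟩ ?_ fun x hx => ?_
  · rintro _ ⟨x, y, hxy, rfl⟩
    exact tsum_tsum_le_opNorm hpq hN hAabs' x y hxy
  · obtain ⟨x', y, hxy, hle⟩ := exists_norm_apply_le_tsum_tsum hpq hN hAabs' x hx
    exact ⟨_, ⟨x', y, hxy, rfl⟩, hle⟩

/-- For `1 < p < ∞` with conjugate exponent `q`, and `X` an infinite
dimensional Banach space of trivial type, the operator `Â` on `ℓ_p(X)` induced by a finitely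
supported scalar matrix `A = (a_{m,n})`, `Â((x_n)_n) = (Σ_n a_{m,n} x_n)_m`, satisfies
`‖Â‖_{L(ℓ_p(X))} = sup { Σ_m Σ_n |x_n y_m a_{m,n}| : ‖(x_n)‖_p ‖(y_m)‖_q ≤ 1 }
              = ‖(|a_{m,n}|)‖_{L(ℓ_p)}`,
the operator norm on `ℓ_p` of the matrix of absolute values. -/
theorem stmt19 (p q : ℝ≥0∞) (hp : 1 < p) (hp' : p ≠ ∞) (hq : p⁻¹ + q⁻¹ = 1) [Fact (1 ≤ p)] [Fact (1 ≤ q)]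
    (X : Type*) [NormedAddCommGroup X] [NormedSpace ℂ X] [CompleteSpace X]
    (htriv : HasTrivialType X)
    (A : ℕ → ℕ → ℂ) (hA : {x : ℕ × ℕ | A x.1 x.2 ≠ 0}.Finite)
    (Ahat : lp (fun _ : ℕ => X) p →L[ℂ] lp (fun _ : ℕ => X) p)
    (hAhat : ∀ (x : lp (fun _ : ℕ => X) p) (m : ℕ), (Ahat x) m = ∑' n, A m n • x n)
    (Aabs : lp (fun _ : ℕ => ℂ) p →L[ℂ] lp (fun _ : ℕ => ℂ) p)
    (hAabs : ∀ (x : lp (fun _ : ℕ => ℂ) p) (m : ℕ),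
      (Aabs x) m = ∑' n, (‖A m n‖ : ℂ) * x n) :
    ‖Ahat‖ = sSup {s : ℝ | ∃ (x : lp (fun _ : ℕ => ℝ) p) (y : lp (fun _ : ℕ => ℝ) q),
        ‖x‖ * ‖y‖ ≤ 1 ∧ s = ∑' m, ∑' n, |x n| * |y m| * ‖A m n‖} ∧
      ‖Ahat‖ = ‖Aabs‖ :=
  stmt19_general p q hp hp' hq X htriv A hA Ahat hAhat Aabs hAabs
end
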